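/- arXiv:2501.13013 — 2 statements merged into one kernel-verified Lean document; each statement's English description precedes it below -/
import Mathlib

section
/- Let M ∈ 𝕄, let π be a randomized stationary policy and let X_π be its set of recurrent pairs (the pairs (s,a) with s recurrent under the Markov chain induced by π on M and π(a|s) > 0). Let A be any learning agent and s0 an initial state such that E^{M,A}_{s0}[Σ_{x∉X_π} N_T(x)] = Ω(log(T)). Then the vectors μ_T(x) := 1{x ∉ X_π}·E^{M,A}_{s0}[N_T(x)] / E^{M,A}_{s0}[Σ_{x'∉X_π} N_T(x')] converge to the set Φ(M/X_π) as T → ∞: every limit point of the sequence (μ_T) is an invariant measure of the minor M/X_π. -/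
open MeasureTheory ProbabilityTheory Filter Set Asymptotics
open scoped ENNReal NNReal BigOperators Classical

noncomputable section

/-- A finite Markov decision process on state space `S` with pair space `X`.
The map `st : X → S` (fixed externally) assigns to each state-action pair its state;
the action sets `A(s)` are the fibers of `st`. -/
structure MDP (S X : Type) [MeasurableSpace S] where
  /-- transition kernel: `p x` is the distribution of the next state after playing pair `x` -/
  p : X → Measure S
  p_prob : ∀ x, IsProbabilityMeasure (p x)
  /-- reward distribution of the pair `x`, a probability distribution on `[0,1] ⊆ ℝ` -/
  r : X → Measure ℝ
  r_prob : ∀ x, IsProbabilityMeasure (r x)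
  r_supp : ∀ x, r x (Set.Icc (0:ℝ) 1)ᶜ = 0

namespace MDPTheory

variable {S X : Type} [Fintype S] [MeasurableSpace S] [MeasurableSingletonClass S]
  [Fintype X] [MeasurableSpace X] [MeasurableSingletonClass X]

/-- mean reward of pair `x` -/
def rbar (M : MDP S X) (x : X) : ℝ := ∫ t, t ∂(M.r x)

/-- a randomized stationary policy: a probability distribution on the pairs of each fiber -/
def IsPolicy (st : X → S) (π : S → X → ℝ) : Prop :=
  (∀ s x, 0 ≤ π s x) ∧ (∀ s, ∑ x, π s x = 1) ∧ (∀ s x, π s x ≠ 0 → st x = s)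

/-- transition matrix of the Markov chain induced by a stationary policy -/
def polStep (st : X → S) (M : MDP S X) (π : S → X → ℝ) (s s' : S) : ℝ :=
  ∑ x ∈ Finset.univ.filter (fun x => st x = s), π s x * (M.p x {s'}).toReal

/-- `polVal st M π n s` : expected total reward over `n` steps starting from `s`, playing `π` -/
def polVal (st : X → S) (M : MDP S X) (π : S → X → ℝ) : ℕ → S → ℝ
  | 0 => fun _ => 0
  | (n+1) => fun s =>
      (∑ x ∈ Finset.univ.filter (fun x => st x = s), π s x * rbar M x)
        + ∑ s', polStep st M π s s' * polVal st M π n s'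

/-- long-run average reward (gain) of a stationary policy from state `s` -/
def gain (st : X → S) (M : MDP S X) (π : S → X → ℝ) (s : S) : ℝ :=
  atTop.limsup (fun T : ℕ => polVal st M π T s / T)

/-- the optimal gain `g*(M)` -/
def gainOpt (st : X → S) (M : MDP S X) : ℝ :=
  sSup {g : ℝ | ∃ π, IsPolicy st π ∧ ∃ s, g = gain st M π s}

/-- gain-optimal (stationary) policies, membership in `Π*(M)` -/
def GainOptimal (st : X → S) (M : MDP S X) (π : S → X → ℝ) : Prop :=
  IsPolicy st π ∧ ∀ s, gain st M π s = gainOpt st M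

/-- the gap `Δ*(x; M)` of the pair `x`, relative to a bias function `h` -/
def gap (st : X → S) (M : MDP S X) (h : S → ℝ) (x : X) : ℝ :=
  gainOpt st M + h (st x) - rbar M x - ∑ s', (M.p x {s'}).toReal * h s'

/-- `h` is an optimal bias function of `M`: it satisfies the average-reward Bellman
optimality equation `g*(M) + h(s) = max_{x ∈ A(s)} (r(x) + Σ_{s'} p(s'|x) h(s'))`. -/
def IsOptBias (st : X → S) (M : MDP S X) (h : S → ℝ) : Prop :=
  (∀ x, 0 ≤ gap st M h x) ∧ ∀ s, ∃ x, st x = s ∧ gap st M h x = 0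

/-- one-step reachability in `M` (via some pair) -/
def commStep (st : X → S) (M : MDP S X) (s s' : S) : Prop :=
  ∃ x, st x = s ∧ M.p x {s'} ≠ 0

/-- `M` is communicating: every state is reachable from every other state -/
def Communicating (st : X → S) (M : MDP S X) : Prop :=
  ∀ s s', Relation.ReflTransGen (commStep st M) s s'

/-- one-step transition relation of the Markov chain induced by the policy `π` -/
def polRel (st : X → S) (M : MDP S X) (π : S → X → ℝ) (s s' : S) : Prop :=
  ∃ x, st x = s ∧ π s x ≠ 0 ∧ M.p x {s'} ≠ 0

/-- a state is recurrent for the chain induced by `π` iff it communicates back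
with everything it can reach (the standard combinatorial characterization for
finite Markov chains) -/
def recurrentState (st : X → S) (M : MDP S X) (π : S → X → ℝ) (s : S) : Prop :=
  ∀ s', Relation.ReflTransGen (polRel st M π) s s' → Relation.ReflTransGen (polRel st M π) s' s

/-- the recurrent pairs `X_π` of a stationary policy `π` -/
def recurrentPairs (st : X → S) (M : MDP S X) (π : S → X → ℝ) : Set X :=
  {x | recurrentState st M π (st x) ∧ π (st x) x ≠ 0}

/-- the policy playing uniformly among weakly optimal pairs (`gap = 0`) at every state -/
def uniformOpt (st : X → S) (M : MDP S X) (h : S → ℝ) : S → X → ℝ := fun s x =>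
  if st x = s ∧ gap st M h x = 0 then
    (1 : ℝ) / (Finset.univ.filter (fun y => st y = s ∧ gap st M h y = 0)).card
  else 0

/-- the optimal pairs `X*(M)`: recurrent pairs of the uniformly-weakly-optimal policy -/
def optPairs (st : X → S) (M : MDP S X) (h : S → ℝ) : Set X :=
  recurrentPairs st M (uniformOpt st M h)

/-- Kullback-Leibler divergence of two measures -/
def klDiv {α : Type} [MeasurableSpace α] (μ ν : Measure α) : ℝ≥0∞ :=
  if μ ≪ ν ∧ Integrable (llr μ ν) μ then ENNReal.ofReal (∫ z, llr μ ν z ∂μ) else ⊤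

/-- `KL_x(M‖M†) = KL(p(·|x)‖p†(·|x)) + KL(r(·|x)‖r†(·|x))` -/
def KLx (M M' : MDP S X) (x : X) : ℝ≥0∞ :=
  klDiv (M.p x) (M'.p x) + klDiv (M.r x) (M'.r x)

/-- `M† ≫ M` : absolute continuity of kernels and rewards at every pair -/
def Dominates (M' M : MDP S X) : Prop := ∀ x : X, M.p x ≪ M'.p x ∧ M.r x ≪ M'.r x

/-- the alternative set `Alt(M)` -/
def AltSet (st : X → S) (𝕄 : Set (MDP S X)) (M : MDP S X) : Set (MDP S X) :=
  {M' | M' ∈ 𝕄 ∧ Dominates M' M ∧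
    ¬ ∃ π : S → X → ℝ, GainOptimal st M' π ∧ GainOptimal st M π}

/-- the confusing set `Cnf(M)` (relative to the bias function `h` of `M`) -/
def CnfSet (st : X → S) (𝕄 : Set (MDP S X)) (M : MDP S X) (h : S → ℝ) : Set (MDP S X) :=
  {M' | M' ∈ AltSet st 𝕄 M ∧ ∀ x ∈ optPairs st M h, M'.p x = M.p x ∧ M'.r x = M.r x}

/-- invariant measures `Φ(M)` of `M` (as vectors on the pair space) -/
def InvMeasure (st : X → S) (M : MDP S X) (μ : X → ℝ) : Prop :=
  (∀ x, 0 ≤ μ x) ∧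
    ∀ s : S, ∑ x ∈ Finset.univ.filter (fun x => st x = s), μ x
      = ∑ x, μ x * (M.p x {s}).toReal

/-- reachability using only pairs of `X0` -/
def reachIn (st : X → S) (M : MDP S X) (X0 : Set X) (s s' : S) : Prop :=
  Relation.ReflTransGen (fun a b => ∃ x ∈ X0, st x = a ∧ M.p x {b} ≠ 0) s s'

/-- states of the minor `M/X0`: `s` and `s'` are merged iff they lie in a common
communicating component of `X0` -/
def minorEq (st : X → S) (M : MDP S X) (X0 : Set X) (s s' : S) : Prop :=
  s = s' ∨ ((∃ x ∈ X0, st x = s) ∧ (∃ x ∈ X0, st x = s') ∧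
    reachIn st M X0 s s' ∧ reachIn st M X0 s' s)

/-- invariant measures `Φ(M/X0)` of the minor `M/X0`, viewed as vectors indexed by `X`
(for every state `[s]` of the minor, `Σ_a μ([s],a) = Σ_x μ(x)·[p]([s]|x)`). -/
def MinorInvMeasure (st : X → S) (M : MDP S X) (X0 : Set X) (μ : X → ℝ) : Prop :=
  (∀ x, 0 ≤ μ x) ∧
    ∀ s : S, ∑ x ∈ Finset.univ.filter (fun x => minorEq st M X0 (st x) s), μ x
      = ∑ x, μ x * ∑ s' ∈ Finset.univ.filter (fun s' => minorEq st M X0 s' s),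
          (M.p x {s'}).toReal

/-- `X0` is a closed set of pairs: playing pairs of `X0` one remains in the states
spawned by `X0`, and the restriction of `M` to `X0` has no transient states. -/
def IsClosedPairs (st : X → S) (M : MDP S X) (X0 : Set X) : Prop :=
  (∀ x ∈ X0, M.p x {s | ∃ y ∈ X0, st y = s} = 1) ∧
    (∀ s s', (∃ y ∈ X0, st y = s) → reachIn st M X0 s s' → reachIn st M X0 s' s)

/-! ### Learning agents, trajectories and induced laws -/

/-- the pair played at step `n` (`= X_{n+1}` in 1-based time) -/
def pairAt (n : ℕ) (ω : ℕ → X × ℝ) : X := (ω n).1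

/-- the reward received at step `n` (`= R_{n+1}` in 1-based time) -/
def rewAt (n : ℕ) (ω : ℕ → X × ℝ) : ℝ := (ω n).2

/-- the history of the first `n` completed steps -/
def hist (n : ℕ) (ω : ℕ → X × ℝ) : Fin n → X × ℝ := fun i => ω i

/-- A learning agent: a history-dependent randomized policy.  Given the history of the
first `n` steps and the current state, it picks the next pair (measurably), supported on
the pairs of the current state. -/
structure Agent (S X : Type) [MeasurableSpace S] [MeasurableSpace X] (st : X → S) where
  policy : (n : ℕ) → Kernel ((Fin n → X × ℝ) × S) X
  policy_markov : ∀ n, IsMarkovKernel (policy n)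
  policy_supp : ∀ n y s, policy n (y, s) {x | st x = s} = 1

/-- `P` is the law `P^{M,A}_{s0}` of the trajectory of the agent `A` on the MDP `M`
started at `s0`: the first state is `s0`, rewards and next states are generated by `M`,
and pairs are chosen by the policy of `A` given the history and the current state. -/
def IsLawOf (st : X → S) (M : MDP S X) (A : Agent S X st) (s0 : S)
    (P : Measure (ℕ → X × ℝ)) : Prop :=
  IsProbabilityMeasure P ∧
  -- initial step: `S_1 = s0` and `X_1 ~ A.policy 0 (∅, s0)`
  (∀ x : X, P {ω | pairAt 0 ω = x} = A.policy 0 (fun i => i.elim0, s0) {x}) ∧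
  -- environment step: given the history and `X_{n+1}`, the reward `R_{n+1}` has law
  -- `r(·|X_{n+1})` and the next state `S_{n+2}` has law `p(·|X_{n+1})`, independently
  (∀ n : ℕ, ∀ φ : (Fin n → X × ℝ) × X → ℝ≥0∞, Measurable φ →
    ∀ f : ℝ → ℝ≥0∞, Measurable f → ∀ s : S,
    ∫⁻ ω, φ (hist n ω, pairAt n ω) * f (rewAt n ω) *
        (if st (pairAt (n+1) ω) = s then 1 else 0) ∂P
      = ∫⁻ ω, φ (hist n ω, pairAt n ω) * (∫⁻ t, f t ∂(M.r (pairAt n ω))) *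
          (M.p (pairAt n ω) {s}) ∂P) ∧
  -- agent step: given the history and the new state, the next pair is chosen by the policy
  (∀ n : ℕ, ∀ ψ : (Fin (n+1) → X × ℝ) → ℝ≥0∞, Measurable ψ → ∀ x : X,
    ∫⁻ ω, ψ (hist (n+1) ω) * (if pairAt (n+1) ω = x then 1 else 0) ∂P
      = ∫⁻ ω, ψ (hist (n+1) ω) * (if st (pairAt (n+1) ω) = st x then 1 else 0) *
          (A.policy (n+1) (hist (n+1) ω, st x) {x}) ∂P)

/-- the number of visits `N_T(x) = Σ_{t=1}^{T-1} 1{X_t = x}` -/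
def nvis (T : ℕ) (x : X) (ω : ℕ → X × ℝ) : ℕ :=
  ∑ k ∈ Finset.range (T - 1), if pairAt k ω = x then 1 else 0

/-- the regret `Reg(T; M, A, s0) = T·g*(M) − E[Σ_{t=1}^T R_t]` of a trajectory law `P` -/
def regret (st : X → S) (M : MDP S X) (P : Measure (ℕ → X × ℝ)) (T : ℕ) : ℝ :=
  T * gainOpt st M - ∫ ω, (∑ k ∈ Finset.range T, rewAt k ω) ∂P

/-- the agent `A` is consistent on `𝕄`: its regret is `o(T^η)` on every model of `𝕄`,
from every initial state, for every `η > 0` -/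
def Consistent (st : X → S) (𝕄 : Set (MDP S X)) (A : Agent S X st) : Prop :=
  ∀ M' ∈ 𝕄, ∀ s0 : S, ∀ P : Measure (ℕ → X × ℝ), IsLawOf st M' A s0 P →
    ∀ η : ℝ, 0 < η →
      (fun T : ℕ => regret st M' P T) =o[atTop] (fun T : ℕ => (T : ℝ) ^ η)

end MDPTheory
namespace MDPTheory

variable {S X : Type} [Fintype S] [MeasurableSpace S] [MeasurableSingletonClass S]
  [Fintype X] [MeasurableSpace X] [MeasurableSingletonClass X]
section AuxProb

lemma sum_meas_singleton {α : Type} [Fintype α] [MeasurableSpace α] [MeasurableSingletonClass α]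
    (μ : Measure α) : ∑ a, μ {a} = μ Set.univ := by
  rw [← measure_biUnion_finset ?_ (fun b _ => measurableSet_singleton b)]
  · congr 1; simp [Set.eq_univ_iff_forall]
  · intro a _ b _ hab
    simp [Function.onFun, hab]

variable {st : X → S} {M : MDP S X}

lemma measurable_pairAt (k : ℕ) : Measurable (pairAt (X := X) k) :=
  measurable_fst.comp (measurable_pi_apply k)

lemma measurableSet_pairEq (k : ℕ) (x : X) :
    MeasurableSet {ω : ℕ → X × ℝ | pairAt k ω = x} :=
  measurable_pairAt k (measurableSet_singleton x)

lemma measurableSet_stEq (k : ℕ) (s : S) :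
    MeasurableSet {ω : ℕ → X × ℝ | st (pairAt k ω) = s} :=
  measurable_pairAt k ((Set.toFinite (st ⁻¹' {s})).measurableSet)

lemma lint_ite {Ω : Type} [MeasurableSpace Ω] (P : Measure Ω) {E : Set Ω}
    (hE : MeasurableSet E) (c : ℝ≥0∞) :
    ∫⁻ ω, (if ω ∈ E then c else 0) ∂P = c * P E := by
  have h : (fun ω => if ω ∈ E then c else 0) = E.indicator fun _ => c := by
    ext ω; simp [Set.indicator_apply]
  rw [h, lintegral_indicator_const hE]

lemma sum_P_pairEq (P : Measure (ℕ → X × ℝ)) [IsProbabilityMeasure P] (k : ℕ) :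
    ∑ x, P {ω | pairAt k ω = x} = 1 := by
  rw [← measure_biUnion_finset ?_ (fun b _ => measurableSet_pairEq k b)]
  · rw [← measure_univ (μ := P)]
    congr 1
    simp [Set.eq_univ_iff_forall]
  · intro a _ b _ hab
    simp only [Function.onFun]
    apply Set.disjoint_left.2
    intro ω h1 h2
    exact hab (h1.symm.trans h2)

lemma P_stEq (P : Measure (ℕ → X × ℝ)) (k : ℕ) (s : S) :
    P {ω | st (pairAt k ω) = s}
      = ∑ x ∈ Finset.univ.filter (fun x => st x = s), P {ω | pairAt k ω = x} := by
  rw [← measure_biUnion_finset ?_ (fun b _ => measurableSet_pairEq k b)]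
  · congr 1
    ext ω
    simp only [Set.mem_iUnion, Finset.mem_filter, Finset.mem_univ, true_and, Set.mem_setOf_eq]
    constructor
    · intro h; exact ⟨pairAt k ω, h, rfl⟩
    · rintro ⟨x, hx, rfl⟩; exact hx
  · intro a _ b _ hab
    simp only [Function.onFun]
    apply Set.disjoint_left.2
    intro ω h1 h2
    exact hab (h1.symm.trans h2)

lemma lintegral_nvis (P : Measure (ℕ → X × ℝ)) (T : ℕ) (x : X) :
    ∫⁻ ω, (nvis T x ω : ℝ≥0∞) ∂P = ∑ k ∈ Finset.range (T-1), P {ω | pairAt k ω = x} := by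
  have : ∀ ω, (nvis T x ω : ℝ≥0∞)
      = ∑ k ∈ Finset.range (T-1), (if ω ∈ {ω' | pairAt k ω' = x} then (1:ℝ≥0∞) else 0) := by
    intro ω
    simp only [nvis, Set.mem_setOf_eq]
    push_cast
    rfl
  simp only [this]
  rw [lintegral_finset_sum]
  · exact Finset.sum_congr rfl fun k _ => by rw [lint_ite P (measurableSet_pairEq k x), one_mul]
  · intro k _
    exact Measurable.ite (measurableSet_pairEq k x) measurable_const measurable_const

lemma integral_nvis (P : Measure (ℕ → X × ℝ)) [IsProbabilityMeasure P] (T : ℕ) (x : X) :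
    ∫ ω, (nvis T x ω : ℝ) ∂P
      = ∑ k ∈ Finset.range (T-1), (P {ω | pairAt k ω = x}).toReal := by
  have h : ∀ ω, (nvis T x ω : ℝ)
      = ∑ k ∈ Finset.range (T-1), ({ω' | pairAt k ω' = x}).indicator (fun _ => (1:ℝ)) ω := by
    intro ω
    simp only [nvis, Set.indicator_apply, Set.mem_setOf_eq]
    push_cast
    congr 1
  simp only [h]
  rw [integral_finset_sum]
  · exact Finset.sum_congr rfl fun k _ => by
      rw [integral_indicator_const (1:ℝ) (measurableSet_pairEq k x)]; simp [Measure.real]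
  · intro k _
    exact (integrable_const (1:ℝ)).indicator (measurableSet_pairEq k x)

end AuxProb
section AuxCombinatorial

variable {st : X → S} {M : MDP S X} {π : S → X → ℝ}

lemma minorEq_symm {X0 : Set X} {s s' : S} (h : minorEq st M X0 s s') :
    minorEq st M X0 s' s := by
  rcases h with h | ⟨h1, h2, h3, h4⟩
  · exact Or.inl h.symm
  · exact Or.inr ⟨h2, h1, h4, h3⟩

lemma minorEq_trans {X0 : Set X} {a b c : S} (h : minorEq st M X0 a b)
    (h' : minorEq st M X0 b c) : minorEq st M X0 a c := by
  rcases h with rfl | ⟨h1, h2, h3, h4⟩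
  · exact h'
  rcases h' with rfl | ⟨h1', h2', h3', h4'⟩
  · exact Or.inr ⟨h1, h2, h3, h4⟩
  · exact Or.inr ⟨h1, h2', h3.trans h3', h4'.trans h4⟩

lemma recurrentState_of_reach {a b : S} (hrec : recurrentState st M π a)
    (h : Relation.ReflTransGen (polRel st M π) a b) : recurrentState st M π b :=
  fun d hd => (hrec d (h.trans hd)).trans h

lemma reachIn_of_reach {a b : S} (hrec : recurrentState st M π a)
    (h : Relation.ReflTransGen (polRel st M π) a b) :
    reachIn st M (recurrentPairs st M π) a b := by
  induction h with
  | refl => exact Relation.ReflTransGen.refl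
  | @tail c b h1 h2 ih =>
      obtain ⟨y, hy1, hy2, hy3⟩ := h2
      have hc : recurrentState st M π c := recurrentState_of_reach hrec h1
      refine ih.tail ⟨y, ?_, hy1, hy3⟩
      show recurrentState st M π (st y) ∧ π (st y) y ≠ 0
      rw [hy1]
      exact ⟨hc, hy2⟩

lemma minorEq_of_recurrentPair (hπ : IsPolicy st π) {x : X} (hx : x ∈ recurrentPairs st M π)
    {s' : S} (hp : M.p x {s'} ≠ 0) : minorEq st M (recurrentPairs st M π) (st x) s' := by
  obtain ⟨hrec, hpi⟩ := hx
  have hstep : Relation.ReflTransGen (polRel st M π) (st x) s' :=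
    Relation.ReflTransGen.single ⟨x, rfl, hpi, hp⟩
  have hrec' : recurrentState st M π s' := recurrentState_of_reach hrec hstep
  have hback : reachIn st M (recurrentPairs st M π) s' (st x) :=
    reachIn_of_reach hrec' (hrec s' hstep)
  have hfwd : reachIn st M (recurrentPairs st M π) (st x) s' :=
    Relation.ReflTransGen.single ⟨x, ⟨hrec, hpi⟩, rfl, hp⟩
  obtain ⟨y, hy⟩ : ∃ y, π s' y ≠ 0 := by
    by_contra hcon
    push_neg at hcon
    have h1 := hπ.2.1 s'
    simp only [hcon] at h1
    simp at h1
  have hys : st y = s' := hπ.2.2 s' y hy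
  refine Or.inr ⟨⟨x, ⟨hrec, hpi⟩, rfl⟩, ⟨y, ?_, hys⟩, hfwd, hback⟩
  show recurrentState st M π (st y) ∧ π (st y) y ≠ 0
  rw [hys]
  exact ⟨hrec', hy⟩

lemma sum_p_class (hπ : IsPolicy st π) {x : X} (hx : x ∈ recurrentPairs st M π) (s : S) :
    ∑ s' ∈ Finset.univ.filter (fun s' => minorEq st M (recurrentPairs st M π) s' s),
        (M.p x {s'}).toReal
      = if minorEq st M (recurrentPairs st M π) (st x) s then 1 else 0 := by
  haveI := M.p_prob x
  split_ifs with h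
  · rw [Finset.sum_subset (Finset.subset_univ _), ← ENNReal.toReal_sum
      (fun a _ => measure_ne_top _ _)]
    · rw [sum_meas_singleton, measure_univ, ENNReal.toReal_one]
    · intro s' _ hs'
      simp only [Finset.mem_filter, Finset.mem_univ, true_and] at hs'
      by_contra hne
      have hp : M.p x {s'} ≠ 0 := by
        intro h0; rw [h0] at hne; simp at hne
      exact hs' (minorEq_trans (minorEq_symm (minorEq_of_recurrentPair hπ hx hp)) h)
  · apply Finset.sum_eq_zero
    intro s' hs'
    simp only [Finset.mem_filter, Finset.mem_univ, true_and] at hs'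
    by_contra hne
    have hp : M.p x {s'} ≠ 0 := by
      intro h0; rw [h0] at hne; simp at hne
    exact h (minorEq_trans (minorEq_of_recurrentPair hπ hx hp) hs')

end AuxCombinatorial

section AuxChain

variable {st : X → S} {M : MDP S X}

lemma chain_step {A : Agent S X st} {s0 : S} {P : Measure (ℕ → X × ℝ)}
    (hP : IsLawOf st M A s0 P) (k : ℕ) (s : S) :
    P {ω | st (pairAt (k+1) ω) = s} = ∑ x, M.p x {s} * P {ω | pairAt k ω = x} := by
  have key : ∀ x : X, P ({ω | pairAt k ω = x} ∩ {ω | st (pairAt (k+1) ω) = s})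
      = M.p x {s} * P {ω | pairAt k ω = x} := by
    intro x
    have henv := hP.2.2.1 k (fun p => if p.2 = x then 1 else 0)
      (Measurable.ite (measurable_snd (measurableSet_singleton x))
        measurable_const measurable_const)
      (fun _ => 1) measurable_const s
    simp only [] at henv
    have hL : ∫⁻ ω, (if pairAt k ω = x then (1:ℝ≥0∞) else 0) * 1 *
        (if st (pairAt (k+1) ω) = s then 1 else 0) ∂P
        = P ({ω | pairAt k ω = x} ∩ {ω | st (pairAt (k+1) ω) = s}) := by
      rw [← one_mul (P _),
        ← lint_ite P ((measurableSet_pairEq k x).inter (measurableSet_stEq (k+1) s)) 1]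
      congr 1
      ext ω
      by_cases h1 : pairAt k ω = x <;> by_cases h2 : st (pairAt (k+1) ω) = s <;>
        simp [h1, h2, Set.mem_setOf_eq]
    have hR : ∫⁻ ω, (if pairAt k ω = x then (1:ℝ≥0∞) else 0) *
        (∫⁻ _t, 1 ∂(M.r (pairAt k ω))) * (M.p (pairAt k ω) {s}) ∂P
        = M.p x {s} * P {ω | pairAt k ω = x} := by
      rw [← lint_ite P (measurableSet_pairEq k x) (M.p x {s})]
      congr 1
      ext ω
      by_cases h1 : pairAt k ω = x
      · haveI := M.r_prob x
        simp [h1, lintegral_one, measure_univ]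
      · simp [h1]
    rw [hL, hR] at henv
    exact henv
  calc P {ω | st (pairAt (k+1) ω) = s}
      = ∑ x, P ({ω | pairAt k ω = x} ∩ {ω | st (pairAt (k+1) ω) = s}) := by
        rw [← measure_biUnion_finset ?_
          (fun b _ => (measurableSet_pairEq k b).inter (measurableSet_stEq (k+1) s))]
        · congr 1
          ext ω
          simp only [Set.mem_iUnion, Finset.mem_univ, Set.mem_inter_iff, Set.mem_setOf_eq,
            exists_prop, true_and]
          constructor
          · intro h; exact ⟨pairAt k ω, rfl, h⟩
          · rintro ⟨x, -, h⟩; exact h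
        · intro a _ b _ hab
          simp only [Function.onFun]
          apply Set.disjoint_left.2
          rintro ω ⟨h1, -⟩ ⟨h2, -⟩
          exact hab (h1.symm.trans h2)
    _ = ∑ x, M.p x {s} * P {ω | pairAt k ω = x} := Finset.sum_congr rfl fun x _ => key x

end AuxChain
section AuxKey

variable {st : X → S} {M : MDP S X} {π : S → X → ℝ}

lemma real_chain {A : Agent S X st} {s0 : S} {P : Measure (ℕ → X × ℝ)}
    (hP : IsLawOf st M A s0 P) (k : ℕ) (s' : S) :
    ∑ x ∈ Finset.univ.filter (fun x => st x = s'), (P {ω | pairAt (k+1) ω = x}).toReal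
      = ∑ x, (M.p x {s'}).toReal * (P {ω | pairAt k ω = x}).toReal := by
  haveI := hP.1
  have h1 := chain_step hP k s'
  rw [P_stEq P (k+1) s'] at h1
  calc ∑ x ∈ Finset.univ.filter (fun x => st x = s'), (P {ω | pairAt (k+1) ω = x}).toReal
      = (∑ x ∈ Finset.univ.filter (fun x => st x = s'),
          P {ω | pairAt (k+1) ω = x}).toReal :=
        (ENNReal.toReal_sum (fun a _ => measure_ne_top P _)).symm
    _ = (∑ x, M.p x {s'} * P {ω | pairAt k ω = x}).toReal := by rw [← h1]
    _ = ∑ x, (M.p x {s'}).toReal * (P {ω | pairAt k ω = x}).toReal := by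
        rw [ENNReal.toReal_sum]
        · exact Finset.sum_congr rfl fun x _ => ENNReal.toReal_mul
        · intro x _
          haveI := M.p_prob x
          exact ENNReal.mul_ne_top (measure_ne_top _ _) (measure_ne_top _ _)

lemma key_bound (hπ : IsPolicy st π) {A : Agent S X st} {s0 : S} {P : Measure (ℕ → X × ℝ)}
    (hP : IsLawOf st M A s0 P) (T : ℕ) (s : S) :
    |(∑ x ∈ Finset.univ.filter
          (fun x => minorEq st M (recurrentPairs st M π) (st x) s),
        (if x ∈ recurrentPairs st M π then 0 else ∫ ω, (nvis T x ω : ℝ) ∂P))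
      - ∑ x, (if x ∈ recurrentPairs st M π then 0 else ∫ ω, (nvis T x ω : ℝ) ∂P) *
          ∑ s' ∈ Finset.univ.filter
            (fun s' => minorEq st M (recurrentPairs st M π) s' s), (M.p x {s'}).toReal|
      ≤ 1 := by
  haveI := hP.1
  obtain ⟨α, hα⟩ : ∃ α : ℕ → X → ℝ, α = fun k x => (P {ω | pairAt k ω = x}).toReal := ⟨_, rfl⟩
  obtain ⟨B, hB⟩ : ∃ B : ℕ → ℝ, B = fun k => ∑ x ∈ Finset.univ.filter
      (fun x => minorEq st M (recurrentPairs st M π) (st x) s), α k x := ⟨_, rfl⟩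
  set n := T - 1 with hn
  have he2 : ∀ x, ∫ ω, (nvis T x ω : ℝ) ∂P = ∑ k ∈ Finset.range n, α k x := by
    intro x
    rw [integral_nvis P T x, hα]
  -- step 1 : drop the truncation
  have step1 : (∑ x ∈ Finset.univ.filter
          (fun x => minorEq st M (recurrentPairs st M π) (st x) s),
        (if x ∈ recurrentPairs st M π then 0 else ∫ ω, (nvis T x ω : ℝ) ∂P))
      - ∑ x, (if x ∈ recurrentPairs st M π then 0 else ∫ ω, (nvis T x ω : ℝ) ∂P) *
          ∑ s' ∈ Finset.univ.filter
            (fun s' => minorEq st M (recurrentPairs st M π) s' s), (M.p x {s'}).toReal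
      = (∑ x ∈ Finset.univ.filter
          (fun x => minorEq st M (recurrentPairs st M π) (st x) s),
          ∫ ω, (nvis T x ω : ℝ) ∂P)
        - ∑ x, (∫ ω, (nvis T x ω : ℝ) ∂P) *
            ∑ s' ∈ Finset.univ.filter
              (fun s' => minorEq st M (recurrentPairs st M π) s' s), (M.p x {s'}).toReal := by
    rw [Finset.sum_filter, Finset.sum_filter, ← Finset.sum_sub_distrib,
      ← Finset.sum_sub_distrib]
    apply Finset.sum_congr rfl
    intro x _
    by_cases hx : x ∈ recurrentPairs st M π
    · have hQx := sum_p_class hπ hx s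
      simp only [hx, if_true, hQx]
      split_ifs <;> ring
    · simp [hx]
  -- step 4 : one-step balance
  have step4 : ∀ k, (∑ x, α k x *
      ∑ s' ∈ Finset.univ.filter
        (fun s' => minorEq st M (recurrentPairs st M π) s' s), (M.p x {s'}).toReal)
      = B (k+1) := by
    intro k
    have hrc : ∀ s' : S, ∑ x, α k x * (M.p x {s'}).toReal
        = ∑ x ∈ Finset.univ.filter (fun x => st x = s'), α (k+1) x := by
      intro s'
      rw [hα]
      simpa [mul_comm] using (real_chain hP k s').symm
    calc (∑ x, α k x * ∑ s' ∈ Finset.univ.filter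
          (fun s' => minorEq st M (recurrentPairs st M π) s' s), (M.p x {s'}).toReal)
        = ∑ s' ∈ Finset.univ.filter
            (fun s' => minorEq st M (recurrentPairs st M π) s' s),
            ∑ x, α k x * (M.p x {s'}).toReal := by
          simp only [Finset.mul_sum]
          rw [Finset.sum_comm]
      _ = ∑ s' ∈ Finset.univ.filter
            (fun s' => minorEq st M (recurrentPairs st M π) s' s),
            ∑ x ∈ Finset.univ.filter (fun x => st x = s'), α (k+1) x := by
          exact Finset.sum_congr rfl fun s' _ => hrc s'
      _ = B (k+1) := by
          rw [Finset.sum_fiberwise_eq_sum_filter Finset.univ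
            (Finset.univ.filter (fun s' => minorEq st M (recurrentPairs st M π) s' s))
            st (α (k+1)), hB]
          congr 1
          ext x
          simp
  -- step 5/6 : exchange the sums
  have step5 : (∑ x ∈ Finset.univ.filter
        (fun x => minorEq st M (recurrentPairs st M π) (st x) s),
        ∫ ω, (nvis T x ω : ℝ) ∂P) = ∑ k ∈ Finset.range n, B k := by
    simp only [he2]
    rw [Finset.sum_comm, hB]
  have step6 : (∑ x, (∫ ω, (nvis T x ω : ℝ) ∂P) *
        ∑ s' ∈ Finset.univ.filter
          (fun s' => minorEq st M (recurrentPairs st M π) s' s), (M.p x {s'}).toReal)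
      = ∑ k ∈ Finset.range n, B (k+1) := by
    simp only [he2, Finset.sum_mul]
    rw [Finset.sum_comm]
    exact Finset.sum_congr rfl fun k _ => step4 k
  have hBnonneg : ∀ k, 0 ≤ B k := by
    intro k
    rw [hB]
    exact Finset.sum_nonneg fun x _ => by rw [hα]; exact ENNReal.toReal_nonneg
  have hBle : ∀ k, B k ≤ 1 := by
    intro k
    have h1 : B k ≤ ∑ x, α k x := by
      rw [hB]
      exact Finset.sum_le_sum_of_subset_of_nonneg (Finset.subset_univ _)
        (fun x _ _ => by rw [hα]; exact ENNReal.toReal_nonneg)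
    have h2 : ∑ x, α k x = 1 := by
      rw [hα, ← ENNReal.toReal_sum (fun a _ => measure_ne_top P _), sum_P_pairEq P k]
      exact ENNReal.toReal_one
    linarith
  have tel : (∑ k ∈ Finset.range n, B k) - (∑ k ∈ Finset.range n, B (k+1)) = B 0 - B n := by
    have h2 : ∑ k ∈ Finset.range n, (B (k+1) - B k) = B n - B 0 := Finset.sum_range_sub B n
    rw [Finset.sum_sub_distrib] at h2
    linarith
  rw [step1, step5, step6, tel, abs_le]
  constructor
  · nlinarith [hBnonneg 0, hBle n]
  · nlinarith [hBnonneg n, hBle 0]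

end AuxKey


/-- **Navigation decomposition.** If the expected number of visits outside the recurrent
pairs `X_π` of a stationary policy `π` is `Ω(log T)`, then every limit point of the
normalized expected visit vectors (truncated outside `X_π`) is an invariant measure of
the minor `M/X_π`. -/
theorem statement6
    (st : X → S) (hst : Function.Surjective st)
    (𝕄 : Set (MDP S X)) (h𝕄 : ∀ M' ∈ 𝕄, Communicating st M')
    (M : MDP S X) (hM : M ∈ 𝕄)
    (π : S → X → ℝ) (hπ : IsPolicy st π)
    (A : Agent S X st) (s0 : S)
    (P : Measure (ℕ → X × ℝ)) (hP : IsLawOf st M A s0 P)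
    (hlog : ∃ c : ℝ, 0 < c ∧ ∀ᶠ T : ℕ in atTop,
      ENNReal.ofReal (c * Real.log T)
        ≤ ∫⁻ ω, ∑ x ∈ Finset.univ.filter (fun x => x ∉ recurrentPairs st M π),
            (nvis T x ω : ℝ≥0∞) ∂P) :
    ∀ μ : X → ℝ,
      MapClusterPt μ atTop (fun T : ℕ => fun x : X =>
        if x ∈ recurrentPairs st M π then 0 else
          (∫ ω, (nvis T x ω : ℝ) ∂P) /
            ∑ x' ∈ Finset.univ.filter (fun x' => x' ∉ recurrentPairs st M π),
              ∫ ω, (nvis T x' ω : ℝ) ∂P) →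
      MinorInvMeasure st M (recurrentPairs st M π) μ := by
  intro μ hclu
  haveI := hP.1
  obtain ⟨c, hc, hev⟩ := hlog
  obtain ⟨D, hD⟩ : ∃ D : ℕ → ℝ, D = fun T =>
      ∑ x' ∈ Finset.univ.filter (fun x' => x' ∉ recurrentPairs st M π),
        ∫ ω, (nvis T x' ω : ℝ) ∂P := ⟨_, rfl⟩
  obtain ⟨F, hF⟩ : ∃ F : ℕ → (X → ℝ), F = fun T : ℕ => fun x : X =>
      if x ∈ recurrentPairs st M π then 0 else
        (∫ ω, (nvis T x ω : ℝ) ∂P) /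
          ∑ x' ∈ Finset.univ.filter (fun x' => x' ∉ recurrentPairs st M π),
            ∫ ω, (nvis T x' ω : ℝ) ∂P := ⟨_, rfl⟩
  rw [← hF] at hclu
  have hnvis_nonneg : ∀ T x, (0:ℝ) ≤ ∫ ω, (nvis T x ω : ℝ) ∂P := fun T x =>
    integral_nonneg fun ω => by positivity
  have hD_nonneg : ∀ T, 0 ≤ D T := fun T => by
    rw [hD]; exact Finset.sum_nonneg fun x _ => hnvis_nonneg T x
  have hF_nonneg : ∀ T x, 0 ≤ F T x := by
    intro T x
    rw [hF]
    dsimp only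
    split_ifs
    · exact le_refl 0
    · exact div_nonneg (hnvis_nonneg T x) (Finset.sum_nonneg fun x' _ => hnvis_nonneg T x')
  -- the lintegral in hlog equals D T
  have hLD : ∀ T : ℕ, (∫⁻ ω, ∑ x ∈ Finset.univ.filter
        (fun x => x ∉ recurrentPairs st M π), (nvis T x ω : ℝ≥0∞) ∂P) ≠ ⊤ ∧
      (∫⁻ ω, ∑ x ∈ Finset.univ.filter
        (fun x => x ∉ recurrentPairs st M π), (nvis T x ω : ℝ≥0∞) ∂P).toReal = D T := by
    intro T
    have hmeas : ∀ x ∈ Finset.univ.filter (fun x => x ∉ recurrentPairs st M π),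
        Measurable fun ω : ℕ → X × ℝ => (nvis T x ω : ℝ≥0∞) := by
      intro x _
      exact measurable_from_nat.comp (Finset.measurable_sum _ fun k _ =>
        Measurable.ite (measurableSet_pairEq k x) measurable_const measurable_const)
    rw [lintegral_finset_sum _ hmeas]
    have heach : ∀ x, ∫⁻ ω, (nvis T x ω : ℝ≥0∞) ∂P
        = ∑ k ∈ Finset.range (T-1), P {ω | pairAt k ω = x} := fun x => lintegral_nvis P T x
    constructor
    · simp only [heach]
      exact (ENNReal.sum_lt_top.2 fun x _ => ENNReal.sum_lt_top.2 fun k _ =>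
        (measure_ne_top P _).lt_top).ne
    · rw [ENNReal.toReal_sum (fun x _ => by
        simp only [heach]
        exact (ENNReal.sum_lt_top.2 fun k _ => (measure_ne_top P _).lt_top).ne), hD]
      refine Finset.sum_congr rfl fun x _ => ?_
      rw [heach x, ENNReal.toReal_sum (fun k _ => measure_ne_top P _), integral_nvis P T x]
  -- eventual lower bound on D
  have hDbig : ∀ᶠ T : ℕ in atTop, 0 < c * Real.log T ∧ c * Real.log T ≤ D T := by
    filter_upwards [hev, eventually_ge_atTop 3] with T hT h3
    have hlogT : (1:ℝ) ≤ Real.log T := by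
      rw [Real.le_log_iff_exp_le (by positivity)]
      calc Real.exp 1 ≤ 2.7182818286 := Real.exp_one_lt_d9.le
        _ ≤ 3 := by norm_num
        _ ≤ (T:ℝ) := by exact_mod_cast h3
    have hpos : 0 < c * Real.log T := mul_pos hc (lt_of_lt_of_le one_pos hlogT)
    refine ⟨hpos, ?_⟩
    have := ENNReal.toReal_mono (hLD T).1 hT
    rwa [ENNReal.toReal_ofReal hpos.le, (hLD T).2] at this
  -- the master bound
  have hmaster : ∀ s : S, ∀ᶠ T : ℕ in atTop,
      |(∑ x ∈ Finset.univ.filter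
          (fun x => minorEq st M (recurrentPairs st M π) (st x) s), F T x)
        - ∑ x, F T x * ∑ s' ∈ Finset.univ.filter
            (fun s' => minorEq st M (recurrentPairs st M π) s' s), (M.p x {s'}).toReal|
        ≤ 1 / (c * Real.log T) := by
    intro s
    filter_upwards [hDbig] with T hT
    have hDpos : 0 < D T := lt_of_lt_of_le hT.1 hT.2
    have hFx : ∀ x, F T x
        = (if x ∈ recurrentPairs st M π then 0 else ∫ ω, (nvis T x ω : ℝ) ∂P) / D T := by
      intro x
      rw [hF, hD]
      dsimp only
      split_ifs
      · rw [zero_div]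
      · rfl
    have h1 : (∑ x ∈ Finset.univ.filter
          (fun x => minorEq st M (recurrentPairs st M π) (st x) s), F T x)
        = (∑ x ∈ Finset.univ.filter
            (fun x => minorEq st M (recurrentPairs st M π) (st x) s),
            (if x ∈ recurrentPairs st M π then 0 else ∫ ω, (nvis T x ω : ℝ) ∂P)) / D T := by
      rw [Finset.sum_div]
      exact Finset.sum_congr rfl fun x _ => hFx x
    have h2 : (∑ x, F T x * ∑ s' ∈ Finset.univ.filter
            (fun s' => minorEq st M (recurrentPairs st M π) s' s), (M.p x {s'}).toReal)
        = (∑ x, (if x ∈ recurrentPairs st M π then 0 else ∫ ω, (nvis T x ω : ℝ) ∂P) *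
            ∑ s' ∈ Finset.univ.filter
              (fun s' => minorEq st M (recurrentPairs st M π) s' s),
              (M.p x {s'}).toReal) / D T := by
      rw [Finset.sum_div]
      refine Finset.sum_congr rfl fun x _ => ?_
      rw [hFx x, div_mul_eq_mul_div]
    rw [h1, h2, div_sub_div_same, abs_div, abs_of_pos hDpos]
    exact div_le_div₀ zero_le_one (key_bound hπ hP T s) hT.1 hT.2
  have htend0 : Tendsto (fun T : ℕ => 1 / (c * Real.log T)) atTop (nhds 0) := by
    have h1 : Tendsto (fun T : ℕ => c * Real.log T) atTop atTop :=
      (Real.tendsto_log_atTop.comp tendsto_natCast_atTop_atTop).const_mul_atTop hc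
    have h2 : Tendsto (fun T : ℕ => (c * Real.log T)⁻¹) atTop (nhds 0) :=
      tendsto_inv_atTop_zero.comp h1
    simpa [one_div] using h2
  constructor
  · -- nonnegativity
    intro x
    have hcont : ContinuousAt (fun ν : X → ℝ => ν x) μ := (continuous_apply x).continuousAt
    have h2 := MapClusterPt.continuousAt_comp hcont hclu
    have h3 : map ((fun ν : X → ℝ => ν x) ∘ F) atTop ≤ Filter.principal (Set.Ici (0:ℝ)) := by
      rw [Filter.le_principal_iff]
      exact Filter.mem_map.2 (Filter.Eventually.of_forall fun T => hF_nonneg T x)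
    have h4 : ClusterPt (μ x) (Filter.principal (Set.Ici (0:ℝ))) := h2.clusterPt.mono h3
    have h5 : μ x ∈ closure (Set.Ici (0:ℝ)) := mem_closure_iff_clusterPt.2 h4
    rwa [isClosed_Ici.closure_eq] at h5
  · -- balance equations
    intro s
    obtain ⟨Ψ, hΨ⟩ : ∃ Ψ : (X → ℝ) → ℝ, Ψ = fun ν : X → ℝ =>
        (∑ x ∈ Finset.univ.filter
          (fun x => minorEq st M (recurrentPairs st M π) (st x) s), ν x)
        - ∑ x, ν x * ∑ s' ∈ Finset.univ.filter
            (fun s' => minorEq st M (recurrentPairs st M π) s' s),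
            (M.p x {s'}).toReal := ⟨_, rfl⟩
    have hcont : Continuous Ψ := by
      rw [hΨ]
      exact (continuous_finset_sum _ fun x _ => continuous_apply x).sub
        (continuous_finset_sum _ fun x _ => (continuous_apply x).mul continuous_const)
    have htendΨ : Tendsto (Ψ ∘ F) atTop (nhds 0) := by
      refine tendsto_of_tendsto_of_tendsto_of_le_of_le'
        (g := fun T : ℕ => -(1 / (c * Real.log T)))
        (h := fun T : ℕ => 1 / (c * Real.log T)) ?_ htend0 ?_ ?_
      · simpa using htend0.neg
      · filter_upwards [hmaster s] with T hT
        have := abs_le.1 hT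
        simp only [hΨ, Function.comp_apply]
        linarith [this.1]
      · filter_upwards [hmaster s] with T hT
        have := abs_le.1 hT
        simp only [hΨ, Function.comp_apply]
        linarith [this.2]
    have h2 := MapClusterPt.continuousAt_comp hcont.continuousAt hclu
    have h3 : Ψ μ = 0 := eq_of_nhds_neBot (h2.clusterPt.mono htendΨ)
    rw [hΨ] at h3
    simp only [] at h3
    exact sub_eq_zero.1 h3

end MDPTheory
end
end

section
/- For every M ∈ 𝕄 the following two optimization values coincide: inf { Σ_{x∈X} μ(x)·Δ*(x; M) : μ ∈ Φ(M/X*(M)) and inf_{M† ∈ Cnf(M)} Σ_{x∈X} μ(x)·KL_x(M||M†) ≥ 1 } = inf { Σ_{x∈X} μ(x)·Δ*(x; M) : μ ∈ Φ(M) and inf_{M† ∈ Cnf(M)} Σ_{x∈X} μ(x)·KL_x(M||M†) ≥ 1 }. -/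
open MeasureTheory ProbabilityTheory Filter Set Asymptotics
open scoped ENNReal NNReal BigOperators Classical
set_option linter.unusedSectionVars false
set_option maxHeartbeats 1000000

noncomputable section

namespace MDPTheory

variable {S X : Type} [Fintype S] [MeasurableSpace S] [MeasurableSingletonClass S]
  [Fintype X] [MeasurableSpace X] [MeasurableSingletonClass X]

section Aux

open scoped InnerProductSpace

variable (st : X → S) (M : MDP S X) (h : S → ℝ)

lemma aux_sum_meas_singleton {α : Type} [Fintype α] [MeasurableSpace α]
    [MeasurableSingletonClass α] (μ : Measure α) : ∑ a : α, μ {a} = μ Set.univ := by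
  have hd : (↑(Finset.univ : Finset α) : Set α).PairwiseDisjoint (fun a => ({a} : Set α)) := by
    intro a _ b _ hab
    simp [Function.onFun, Set.disjoint_singleton_left, hab]
  have h := measure_biUnion_finset (μ := μ) hd (fun _ _ => measurableSet_singleton _)
  rw [← h]; congr 1; simpa using Set.iUnion_of_singleton α

lemma aux_qsum (x : X) : ∑ s, (M.p x {s}).toReal = 1 := by
  have hp := M.p_prob x
  have h1 : ∑ s : S, M.p x {s} = 1 := by
    rw [aux_sum_meas_singleton]; exact measure_univ
  have h2 : ∀ s ∈ (Finset.univ : Finset S), M.p x {s} ≠ ⊤ := fun s _ => measure_ne_top _ _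
  rw [← ENNReal.toReal_sum h2, h1, ENNReal.toReal_one]

lemma aux_gap_zero {x : X} (hx : x ∈ optPairs st M h) : gap st M h x = 0 := by
  by_contra hg
  exact hx.2 (by simp [uniformOpt, hg])

lemma aux_exists_unifOpt (hbias : IsOptBias st M h) (s : S) :
    ∃ x, st x = s ∧ uniformOpt st M h s x ≠ 0 := by
  obtain ⟨x, hxs, hxg⟩ := hbias.2 s
  refine ⟨x, hxs, ?_⟩
  have hcard : 0 < (Finset.univ.filter (fun y => st y = s ∧ gap st M h y = 0)).card :=
    Finset.card_pos.2 ⟨x, by simp [hxs, hxg]⟩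
  simp only [uniformOpt, hxs, hxg, and_self, if_true, true_and]
  positivity

lemma aux_rec_step {π : S → X → ℝ} {s s' : S} (hs : recurrentState st M π s)
    (hss' : Relation.ReflTransGen (polRel st M π) s s') : recurrentState st M π s' := by
  intro t ht
  exact (hs t (hss'.trans ht)).trans hss'

lemma aux_polRel_to_reachIn (h : S → ℝ) {s s' : S}
    (hs : recurrentState st M (uniformOpt st M h) s)
    (hss' : Relation.ReflTransGen (polRel st M (uniformOpt st M h)) s s') :
    reachIn st M (optPairs st M h) s s' := by
  induction hss' with
  | refl => exact Relation.ReflTransGen.refl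
  | @tail b c hab hbc ih =>
      obtain ⟨x, hx1, hx2, hx3⟩ := hbc
      have hbrec : recurrentState st M (uniformOpt st M h) b := aux_rec_step st M hs hab
      have hxX0 : x ∈ optPairs st M h := ⟨by rw [hx1]; exact hbrec, by rw [hx1]; exact hx2⟩
      exact ih.tail ⟨x, hxX0, hx1, hx3⟩

lemma aux_class_of_step (hbias : IsOptBias st M h) {x : X} {s' : S}
    (hx : x ∈ optPairs st M h) (hp : M.p x {s'} ≠ 0) :
    minorEq st M (optPairs st M h) (st x) s' := by
  have hrec : recurrentState st M (uniformOpt st M h) (st x) := hx.1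
  have hstep : polRel st M (uniformOpt st M h) (st x) s' := ⟨x, rfl, hx.2, hp⟩
  have hrec' : recurrentState st M (uniformOpt st M h) s' :=
    aux_rec_step st M hrec (Relation.ReflTransGen.single hstep)
  obtain ⟨y, hys, hyπ⟩ := aux_exists_unifOpt st M h hbias s'
  have hyX0 : y ∈ optPairs st M h := ⟨by rw [hys]; exact hrec', by rw [hys]; exact hyπ⟩
  refine Or.inr ⟨⟨x, hx, rfl⟩, ⟨y, hyX0, hys⟩, ?_, ?_⟩
  · exact aux_polRel_to_reachIn st M h hrec (Relation.ReflTransGen.single hstep)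
  · exact aux_polRel_to_reachIn st M h hrec'
      (hrec s' (Relation.ReflTransGen.single hstep))

lemma aux_minorEq_refl (X0 : Set X) (s : S) : minorEq st M X0 s s := Or.inl rfl

lemma aux_minorEq_symm {X0 : Set X} {s s' : S} (hss' : minorEq st M X0 s s') :
    minorEq st M X0 s' s := by
  rcases hss' with rfl | ⟨h1, h2, h3, h4⟩
  · exact Or.inl rfl
  · exact Or.inr ⟨h2, h1, h4, h3⟩

lemma aux_minorEq_trans {X0 : Set X} {s s' s'' : S} (h1 : minorEq st M X0 s s')
    (h2 : minorEq st M X0 s' s'') : minorEq st M X0 s s'' := by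
  rcases h1 with rfl | ⟨a1, a2, a3, a4⟩
  · exact h2
  · rcases h2 with rfl | ⟨b1, b2, b3, b4⟩
    · exact Or.inr ⟨a1, a2, a3, a4⟩
    · exact Or.inr ⟨a1, b2, a3.trans b3, b4.trans a4⟩

lemma aux_q_zero_of_not_class (hbias : IsOptBias st M h) {x : X} {s' : S}
    (hx : x ∈ optPairs st M h) (hns : ¬ minorEq st M (optPairs st M h) (st x) s') :
    (M.p x {s'}).toReal = 0 := by
  by_cases hp : M.p x {s'} = 0
  · simp [hp]
  · exact absurd (aux_class_of_step st M h hbias hx hp) hns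

lemma aux_qsum_class (hbias : IsOptBias st M h) {x : X} (hx : x ∈ optPairs st M h) :
    ∑ s' ∈ Finset.univ.filter (fun s' => minorEq st M (optPairs st M h) (st x) s'),
      (M.p x {s'}).toReal = 1 := by
  rw [← aux_qsum M x]
  apply Finset.sum_subset (Finset.subset_univ _)
  intro s' _ hns
  exact aux_q_zero_of_not_class st M h hbias hx (by simpa using hns)

/-- regrouping a sum over pairs by their states -/
lemma aux_regroup (P : S → Prop) (f : X → ℝ) :
    ∑ s' ∈ Finset.univ.filter (fun s' => P s'),
      ∑ x ∈ Finset.univ.filter (fun x => st x = s'), f x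
      = ∑ x ∈ Finset.univ.filter (fun x => P (st x)), f x := by
  calc ∑ s' ∈ Finset.univ.filter (fun s' => P s'),
          ∑ x ∈ Finset.univ.filter (fun x => st x = s'), f x
      = ∑ s' ∈ Finset.univ.filter (fun s' => P s'), ∑ x : X, if st x = s' then f x else 0 :=
        Finset.sum_congr rfl fun s' _ => Finset.sum_filter _ _
    _ = ∑ x : X, ∑ s' ∈ Finset.univ.filter (fun s' => P s'), if st x = s' then f x else 0 :=
        Finset.sum_comm
    _ = ∑ x : X, if P (st x) then f x else 0 := by
        refine Finset.sum_congr rfl fun x _ => ?_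
        rw [Finset.sum_ite_eq]
        simp
    _ = ∑ x ∈ Finset.univ.filter (fun x => P (st x)), f x := (Finset.sum_filter _ _).symm

/-- a maximum principle: a function harmonic w.r.t. the pairs of `X*` is constant on
minor classes -/
lemma aux_harmonic_const (hbias : IsOptBias st M h) (y : S → ℝ)
    (hy : ∀ x ∈ optPairs st M h, y (st x) = ∑ s', (M.p x {s'}).toReal * y s')
    {s s' : S} (hss' : minorEq st M (optPairs st M h) s s') : y s = y s' := by
  set X0 := optPairs st M h with hX0
  rcases hss' with rfl | ⟨_, _, hfwd, hbwd⟩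
  · rfl
  set K := Finset.univ.filter (fun u => minorEq st M X0 s u) with hK
  have hsK : s ∈ K := by simp [hK, aux_minorEq_refl]
  obtain ⟨t, htK, htmax⟩ := Finset.exists_max_image K y ⟨s, hsK⟩
  have hst' : minorEq st M X0 s t := by simpa [hK] using htK
  have hstep : ∀ u, minorEq st M X0 s u → y u = y t → ∀ v,
      (∃ x ∈ X0, st x = u ∧ M.p x {v} ≠ 0) → minorEq st M X0 s v ∧ y v = y t := by
    rintro u hu hyu v ⟨x, hxX0, hxu, hpv⟩
    have hclass : minorEq st M X0 (st x) v := aux_class_of_step st M h hbias hxX0 hpv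
    have hsv : minorEq st M X0 s v := aux_minorEq_trans st M hu (hxu ▸ hclass)
    refine ⟨hsv, ?_⟩
    have hharm := hy x hxX0
    rw [hxu] at hharm
    have hnn : ∀ w ∈ (Finset.univ : Finset S),
        0 ≤ (M.p x {w}).toReal * (y t - y w) := by
      intro w _
      by_cases hq : (M.p x {w}).toReal = 0
      · rw [hq, zero_mul]
      · have hpw : M.p x {w} ≠ 0 := fun hz => hq (by simp [hz])
        have : minorEq st M X0 s w :=
          aux_minorEq_trans st M hu (hxu ▸ aux_class_of_step st M h hbias hxX0 hpw)
        have hwK : w ∈ K := by simp [hK, this]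
        have := htmax w hwK
        have := ENNReal.toReal_nonneg (a := M.p x {w})
        nlinarith
    have hsum0 : ∑ w, (M.p x {w}).toReal * (y t - y w) = 0 := by
      have hexp : ∑ w, (M.p x {w}).toReal * (y t - y w)
          = (∑ w, (M.p x {w}).toReal) * y t - ∑ w, (M.p x {w}).toReal * y w := by
        rw [Finset.sum_mul, ← Finset.sum_sub_distrib]
        exact Finset.sum_congr rfl fun w _ => by ring
      rw [hexp, aux_qsum M x, ← hharm, one_mul, hyu, sub_self]
    have hall := (Finset.sum_eq_zero_iff_of_nonneg hnn).1 hsum0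
    have hv := hall v (Finset.mem_univ v)
    have hqv : (M.p x {v}).toReal ≠ 0 := by
      haveI := M.p_prob x
      rw [ENNReal.toReal_ne_zero]
      exact ⟨hpv, measure_ne_top _ _⟩
    have : y t - y v = 0 := by
      rcases mul_eq_zero.1 hv with hc | hc
      · exact absurd hc hqv
      · exact hc
    linarith
  have hreach : ∀ v, reachIn st M X0 t v → minorEq st M X0 s v ∧ y v = y t := by
    intro v hv
    induction hv with
    | refl => exact ⟨hst', rfl⟩
    | @tail b c hab hbc ih => exact hstep b ih.1 ih.2 c hbc
  have hts : reachIn st M X0 t s := by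
    rcases aux_minorEq_symm st M hst' with rfl | ⟨_, _, _, h4⟩
    · exact Relation.ReflTransGen.refl
    · exact aux_minorEq_symm st M hst' |> fun _ => by
        rcases hst' with rfl | ⟨_, _, _, h4'⟩
        · exact Relation.ReflTransGen.refl
        · exact h4'
  have h1 : y s = y t := (hreach s hts).2
  have h2 : y s' = y t := (hreach s' (hts.trans hfwd)).2
  rw [h1, h2]

/-- the deficiency of a minor-invariant measure sums to zero on each minor class -/
lemma aux_minor_d (X0 : Set X) (μ : X → ℝ) (hμ : MinorInvMeasure st M X0 μ) (s : S) :
    ∑ s' ∈ Finset.univ.filter (fun s' => minorEq st M X0 s' s),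
      ((∑ x, μ x * (M.p x {s'}).toReal)
        - ∑ x ∈ Finset.univ.filter (fun x => st x = s'), μ x) = 0 := by
  have h2 := hμ.2 s
  rw [Finset.sum_sub_distrib]
  have hswap : ∑ s' ∈ Finset.univ.filter (fun s' => minorEq st M X0 s' s),
      ∑ x, μ x * (M.p x {s'}).toReal
      = ∑ x, μ x * ∑ s' ∈ Finset.univ.filter (fun s' => minorEq st M X0 s' s),
          (M.p x {s'}).toReal := by
    rw [Finset.sum_comm]
    exact Finset.sum_congr rfl fun x _ => (Finset.mul_sum _ _ _).symm
  rw [hswap, ← h2, ← aux_regroup st (fun s' => minorEq st M X0 s' s) μ, sub_self]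

lemma aux_d_zero_outside (X0 : Set X) (μ : X → ℝ) (hμ : MinorInvMeasure st M X0 μ) (s : S)
    (hs : ¬ ∃ x ∈ X0, st x = s) :
    (∑ x, μ x * (M.p x {s}).toReal)
      - ∑ x ∈ Finset.univ.filter (fun x => st x = s), μ x = 0 := by
  have hclass : Finset.univ.filter (fun s' => minorEq st M X0 s' s) = {s} := by
    ext s'
    simp only [Finset.mem_filter, Finset.mem_univ, true_and, Finset.mem_singleton]
    constructor
    · rintro (rfl | ⟨_, hs2, _⟩)
      · rfl
      · exact absurd hs2 hs
    · rintro rfl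
      exact aux_minorEq_refl st M X0 s'
  have := aux_minor_d st M X0 μ hμ s
  rw [hclass] at this
  simpa using this

/-- the deficiency of a minor-invariant measure is orthogonal to every harmonic function -/
lemma aux_harmonic_orth (hbias : IsOptBias st M h) (μ : X → ℝ)
    (hμ : MinorInvMeasure st M (optPairs st M h) μ) (y : S → ℝ)
    (hy : ∀ x ∈ optPairs st M h, y (st x) = ∑ s', (M.p x {s'}).toReal * y s') :
    ∑ s, y s * ((∑ x, μ x * (M.p x {s}).toReal)
      - ∑ x ∈ Finset.univ.filter (fun x => st x = s), μ x) = 0 := by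
  set X0 := optPairs st M h with hX0
  set d : S → ℝ := fun s => (∑ x, μ x * (M.p x {s}).toReal)
      - ∑ x ∈ Finset.univ.filter (fun x => st x = s), μ x with hd
  set n : S → ℝ := fun s => ((Finset.univ.filter (fun u => minorEq st M X0 u s)).card : ℝ)
    with hn
  have hnpos : ∀ s, 0 < n s := by
    intro s
    have hmem : s ∈ Finset.univ.filter (fun u => minorEq st M X0 u s) := by
      simp [aux_minorEq_refl]
    exact_mod_cast Nat.cast_pos.2 (Finset.card_pos.2 ⟨s, hmem⟩)
  have hfilters : ∀ {u v : S}, minorEq st M X0 u v →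
      Finset.univ.filter (fun w => minorEq st M X0 w u)
        = Finset.univ.filter (fun w => minorEq st M X0 w v) := by
    intro u v huv
    ext w
    simp only [Finset.mem_filter, Finset.mem_univ, true_and]
    exact ⟨fun hw => aux_minorEq_trans st M hw huv,
      fun hw => aux_minorEq_trans st M hw (aux_minorEq_symm st M huv)⟩
  have hdouble : ∑ s, ∑ s' ∈ Finset.univ.filter (fun s' => minorEq st M X0 s' s),
      (y s / n s) * d s' = 0 := by
    refine Finset.sum_eq_zero fun s _ => ?_
    rw [← Finset.mul_sum, aux_minor_d st M X0 μ hμ s, mul_zero]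
  have hswap : ∑ s, ∑ s' ∈ Finset.univ.filter (fun s' => minorEq st M X0 s' s),
      (y s / n s) * d s'
      = ∑ s' : S, (∑ s ∈ Finset.univ.filter (fun s => minorEq st M X0 s' s), y s / n s)
          * d s' := by
    calc ∑ s, ∑ s' ∈ Finset.univ.filter (fun s' => minorEq st M X0 s' s),
          (y s / n s) * d s'
        = ∑ s, ∑ s' : S, if minorEq st M X0 s' s then (y s / n s) * d s' else 0 :=
          Finset.sum_congr rfl fun s _ => Finset.sum_filter _ _
      _ = ∑ s' : S, ∑ s : S, if minorEq st M X0 s' s then (y s / n s) * d s' else 0 :=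
          Finset.sum_comm
      _ = ∑ s' : S, (∑ s : S, if minorEq st M X0 s' s then y s / n s else 0) * d s' := by
          refine Finset.sum_congr rfl fun s' _ => ?_
          rw [Finset.sum_mul]
          refine Finset.sum_congr rfl fun s _ => ?_
          by_cases hc : minorEq st M X0 s' s <;> simp [hc]
      _ = ∑ s' : S, (∑ s ∈ Finset.univ.filter (fun s => minorEq st M X0 s' s), y s / n s)
            * d s' := by
          refine Finset.sum_congr rfl fun s' _ => ?_
          rw [Finset.sum_filter]
  have hinner : ∀ s', ∑ s ∈ Finset.univ.filter (fun s => minorEq st M X0 s' s), y s / n s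
      = y s' := by
    intro s'
    have hconst : ∀ s ∈ Finset.univ.filter (fun s => minorEq st M X0 s' s),
        y s / n s = y s' / n s' := by
      intro s hs
      rw [Finset.mem_filter] at hs
      have hys : y s' = y s := aux_harmonic_const st M h hbias y hy hs.2
      have hns : n s = n s' := by
        have heq := hfilters (aux_minorEq_symm st M hs.2)
        simp only [hn, heq]
      rw [← hys, hns]
    rw [Finset.sum_congr rfl hconst, Finset.sum_const, nsmul_eq_mul]
    have hcard : ((Finset.univ.filter (fun s => minorEq st M X0 s' s)).card : ℝ) = n s' := by
      rw [hn]
      congr 2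
      ext w
      simp only [Finset.mem_filter, Finset.mem_univ, true_and]
      exact ⟨fun hw => aux_minorEq_symm st M hw, fun hw => aux_minorEq_symm st M hw⟩
    rw [hcard, mul_comm, div_mul_cancel₀ _ (ne_of_gt (hnpos s'))]
  have hfinal : ∑ s' : S, (∑ s ∈ Finset.univ.filter (fun s => minorEq st M X0 s' s),
      y s / n s) * d s' = ∑ s' : S, y s' * d s' :=
    Finset.sum_congr rfl fun s' _ => by rw [hinner]
  have : ∑ s' : S, y s' * d s' = 0 := by rw [← hfinal, ← hswap, hdouble]
  exact this


/-- the flow operator of the restriction of `M` to the optimal pairs -/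
def auxT : EuclideanSpace ℝ X →ₗ[ℝ] EuclideanSpace ℝ S where
  toFun ν := WithLp.toLp 2 (fun s => (∑ x ∈ Finset.univ.filter (fun x => x ∈ optPairs st M h),
      (if st x = s then ν x else 0))
    - ∑ x ∈ Finset.univ.filter (fun x => x ∈ optPairs st M h), ν x * (M.p x {s}).toReal)
  map_add' ν ν' := by
    ext s
    simp only [PiLp.add_apply, PiLp.toLp_apply]
    have h1 : ∑ x ∈ Finset.univ.filter (fun x => x ∈ optPairs st M h),
        (if st x = s then ν x + ν' x else 0)
        = (∑ x ∈ Finset.univ.filter (fun x => x ∈ optPairs st M h),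
            (if st x = s then ν x else 0))
          + ∑ x ∈ Finset.univ.filter (fun x => x ∈ optPairs st M h),
            (if st x = s then ν' x else 0) := by
      rw [← Finset.sum_add_distrib]
      exact Finset.sum_congr rfl fun x _ => by by_cases hc : st x = s <;> simp [hc]
    have h2 : ∑ x ∈ Finset.univ.filter (fun x => x ∈ optPairs st M h),
        (ν x + ν' x) * (M.p x {s}).toReal
        = (∑ x ∈ Finset.univ.filter (fun x => x ∈ optPairs st M h),
            ν x * (M.p x {s}).toReal)
          + ∑ x ∈ Finset.univ.filter (fun x => x ∈ optPairs st M h),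
            ν' x * (M.p x {s}).toReal := by
      rw [← Finset.sum_add_distrib]
      exact Finset.sum_congr rfl fun x _ => by ring
    rw [h1, h2]; ring
  map_smul' c ν := by
    ext s
    simp only [PiLp.smul_apply, smul_eq_mul, RingHom.id_apply, PiLp.toLp_apply]
    have h1 : ∑ x ∈ Finset.univ.filter (fun x => x ∈ optPairs st M h),
        (if st x = s then c * ν x else 0)
        = c * ∑ x ∈ Finset.univ.filter (fun x => x ∈ optPairs st M h),
            (if st x = s then ν x else 0) := by
      rw [Finset.mul_sum]
      exact Finset.sum_congr rfl fun x _ => by by_cases hc : st x = s <;> simp [hc]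
    have h2 : ∑ x ∈ Finset.univ.filter (fun x => x ∈ optPairs st M h),
        (c * ν x) * (M.p x {s}).toReal
        = c * ∑ x ∈ Finset.univ.filter (fun x => x ∈ optPairs st M h),
            ν x * (M.p x {s}).toReal := by
      rw [Finset.mul_sum]
      exact Finset.sum_congr rfl fun x _ => by ring
    rw [h1, h2]; ring

/-- the adjoint of the flow operator -/
def auxT' : EuclideanSpace ℝ S →ₗ[ℝ] EuclideanSpace ℝ X where
  toFun y := WithLp.toLp 2 (fun x => if x ∈ optPairs st M h then
      y (st x) - ∑ s, (M.p x {s}).toReal * y s else 0)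
  map_add' y y' := by
    ext x
    simp only [PiLp.add_apply, PiLp.toLp_apply]
    by_cases hc : x ∈ optPairs st M h <;>
      simp [hc, Finset.sum_add_distrib, mul_add] <;> ring
  map_smul' c y := by
    ext x
    simp only [PiLp.smul_apply, smul_eq_mul, RingHom.id_apply, PiLp.toLp_apply]
    by_cases hc : x ∈ optPairs st M h
    · simp only [if_pos hc, PiLp.smul_apply, smul_eq_mul]
      rw [mul_sub, Finset.mul_sum]
      congr 1
      exact Finset.sum_congr rfl fun s _ => by ring
    · simp [hc]

lemma aux_adj (ν : EuclideanSpace ℝ X) (y : EuclideanSpace ℝ S) :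
    ⟪auxT st M h ν, y⟫_ℝ = ⟪ν, auxT' st M h y⟫_ℝ := by
  simp only [PiLp.inner_apply, RCLike.inner_apply', conj_trivial, auxT, auxT',
    LinearMap.coe_mk, AddHom.coe_mk, PiLp.toLp_apply]
  have hL : ∑ s, ((∑ x ∈ Finset.univ.filter (fun x => x ∈ optPairs st M h),
      (if st x = s then ν x else 0))
      - ∑ x ∈ Finset.univ.filter (fun x => x ∈ optPairs st M h),
          ν x * (M.p x {s}).toReal) * y s
      = (∑ x ∈ Finset.univ.filter (fun x => x ∈ optPairs st M h), ν x * y (st x))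
        - ∑ x ∈ Finset.univ.filter (fun x => x ∈ optPairs st M h),
            ν x * ∑ s, (M.p x {s}).toReal * y s := by
    have h1 : ∑ s, (∑ x ∈ Finset.univ.filter (fun x => x ∈ optPairs st M h),
        (if st x = s then ν x else 0)) * y s
        = ∑ x ∈ Finset.univ.filter (fun x => x ∈ optPairs st M h), ν x * y (st x) := by
      calc ∑ s, (∑ x ∈ Finset.univ.filter (fun x => x ∈ optPairs st M h),
            (if st x = s then ν x else 0)) * y s
          = ∑ s, ∑ x ∈ Finset.univ.filter (fun x => x ∈ optPairs st M h),
              (if st x = s then ν x * y s else 0) := by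
            refine Finset.sum_congr rfl fun s _ => ?_
            rw [Finset.sum_mul]
            exact Finset.sum_congr rfl fun x _ => by
              by_cases hc : st x = s <;> simp [hc]
        _ = ∑ x ∈ Finset.univ.filter (fun x => x ∈ optPairs st M h),
              ∑ s, (if st x = s then ν x * y s else 0) := Finset.sum_comm
        _ = ∑ x ∈ Finset.univ.filter (fun x => x ∈ optPairs st M h), ν x * y (st x) := by
            refine Finset.sum_congr rfl fun x _ => ?_
            rw [Finset.sum_ite_eq]
            simp
    have h2 : ∑ s, (∑ x ∈ Finset.univ.filter (fun x => x ∈ optPairs st M h),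
        ν x * (M.p x {s}).toReal) * y s
        = ∑ x ∈ Finset.univ.filter (fun x => x ∈ optPairs st M h),
            ν x * ∑ s, (M.p x {s}).toReal * y s := by
      calc ∑ s, (∑ x ∈ Finset.univ.filter (fun x => x ∈ optPairs st M h),
            ν x * (M.p x {s}).toReal) * y s
          = ∑ s, ∑ x ∈ Finset.univ.filter (fun x => x ∈ optPairs st M h),
              ν x * (M.p x {s}).toReal * y s := by
            refine Finset.sum_congr rfl fun s _ => Finset.sum_mul _ _ _
        _ = ∑ x ∈ Finset.univ.filter (fun x => x ∈ optPairs st M h),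
              ∑ s, ν x * (M.p x {s}).toReal * y s := Finset.sum_comm
        _ = ∑ x ∈ Finset.univ.filter (fun x => x ∈ optPairs st M h),
              ν x * ∑ s, (M.p x {s}).toReal * y s := by
            refine Finset.sum_congr rfl fun x _ => ?_
            rw [Finset.mul_sum]
            exact Finset.sum_congr rfl fun s _ => by ring
    rw [← h1, ← h2, ← Finset.sum_sub_distrib]
    exact Finset.sum_congr rfl fun s _ => by ring
  rw [hL]
  have hR : ∑ x : X, ν x * (if x ∈ optPairs st M h then
      y (st x) - ∑ s, (M.p x {s}).toReal * y s else 0)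
      = ∑ x ∈ Finset.univ.filter (fun x => x ∈ optPairs st M h),
          ν x * (y (st x) - ∑ s, (M.p x {s}).toReal * y s) := by
    rw [Finset.sum_filter]
    exact Finset.sum_congr rfl fun x _ => by
      by_cases hc : x ∈ optPairs st M h <;> simp [hc]
  rw [hR, ← Finset.sum_sub_distrib]
  exact Finset.sum_congr rfl fun x _ => by ring

lemma aux_range : LinearMap.range (auxT st M h) = (LinearMap.ker (auxT' st M h))ᗮ := by
  have horth : (LinearMap.range (auxT st M h))ᗮ = LinearMap.ker (auxT' st M h) := by
    ext y
    simp only [Submodule.mem_orthogonal, LinearMap.mem_range, LinearMap.mem_ker]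
    constructor
    · intro hy
      have h1 : ⟪auxT st M h (auxT' st M h y), y⟫_ℝ = 0 := hy _ ⟨_, rfl⟩
      rw [aux_adj] at h1
      exact inner_self_eq_zero.mp h1
    · rintro hy u ⟨v, rfl⟩
      rw [aux_adj, hy, inner_zero_right]
  rw [← horth, Submodule.orthogonal_orthogonal]

lemma aux_pairing (μ : X → ℝ) (y : S → ℝ) (F : Finset X) :
    ∑ s, y s * ((∑ x ∈ F, μ x * (M.p x {s}).toReal)
      - ∑ x ∈ F.filter (fun x => st x = s), μ x)
      = ∑ x ∈ F, μ x * ((∑ s, (M.p x {s}).toReal * y s) - y (st x)) := by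
  have hA : ∑ s, y s * ∑ x ∈ F, μ x * (M.p x {s}).toReal
      = ∑ x ∈ F, μ x * ∑ s, (M.p x {s}).toReal * y s := by
    calc ∑ s, y s * ∑ x ∈ F, μ x * (M.p x {s}).toReal
        = ∑ s, ∑ x ∈ F, y s * (μ x * (M.p x {s}).toReal) := by
          exact Finset.sum_congr rfl fun s _ => Finset.mul_sum _ _ _
      _ = ∑ x ∈ F, ∑ s, y s * (μ x * (M.p x {s}).toReal) := Finset.sum_comm
      _ = ∑ x ∈ F, μ x * ∑ s, (M.p x {s}).toReal * y s := by
          refine Finset.sum_congr rfl fun x _ => ?_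
          rw [Finset.mul_sum]
          exact Finset.sum_congr rfl fun s _ => by ring
  have hB : ∑ s, y s * ∑ x ∈ F.filter (fun x => st x = s), μ x
      = ∑ x ∈ F, μ x * y (st x) := by
    calc ∑ s, y s * ∑ x ∈ F.filter (fun x => st x = s), μ x
        = ∑ s, ∑ x ∈ F, (if st x = s then y s * μ x else 0) := by
          refine Finset.sum_congr rfl fun s _ => ?_
          rw [Finset.sum_filter, Finset.mul_sum]
          exact Finset.sum_congr rfl fun x _ => by
            by_cases hc : st x = s <;> simp [hc]
      _ = ∑ x ∈ F, ∑ s, (if st x = s then y s * μ x else 0) := Finset.sum_comm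
      _ = ∑ x ∈ F, μ x * y (st x) := by
          refine Finset.sum_congr rfl fun x _ => ?_
          rw [Finset.sum_ite_eq]
          simp [mul_comm]
  calc ∑ s, y s * ((∑ x ∈ F, μ x * (M.p x {s}).toReal)
        - ∑ x ∈ F.filter (fun x => st x = s), μ x)
      = (∑ s, y s * ∑ x ∈ F, μ x * (M.p x {s}).toReal)
        - ∑ s, y s * ∑ x ∈ F.filter (fun x => st x = s), μ x := by
        rw [← Finset.sum_sub_distrib]
        exact Finset.sum_congr rfl fun s _ => by ring
    _ = (∑ x ∈ F, μ x * ∑ s, (M.p x {s}).toReal * y s) - ∑ x ∈ F, μ x * y (st x) := by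
        rw [hA, hB]
    _ = ∑ x ∈ F, μ x * ((∑ s, (M.p x {s}).toReal * y s) - y (st x)) := by
        rw [← Finset.sum_sub_distrib]
        exact Finset.sum_congr rfl fun x _ => by ring

lemma aux_exists_nu (hbias : IsOptBias st M h) (μ : X → ℝ)
    (hμ : MinorInvMeasure st M (optPairs st M h) μ) :
    ∃ ν : EuclideanSpace ℝ X, auxT st M h ν = WithLp.toLp 2 (fun s =>
      (∑ x ∈ Finset.univ.filter (fun x => ¬ x ∈ optPairs st M h), μ x * (M.p x {s}).toReal)
        - ∑ x ∈ (Finset.univ.filter (fun x => ¬ x ∈ optPairs st M h)).filter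
            (fun x => st x = s), μ x) := by
  set X0 := optPairs st M h with hX0
  set Fc : Finset X := Finset.univ.filter (fun x => ¬ x ∈ X0) with hFc
  set b : EuclideanSpace ℝ S := WithLp.toLp 2 (fun s =>
      (∑ x ∈ Fc, μ x * (M.p x {s}).toReal)
        - ∑ x ∈ Fc.filter (fun x => st x = s), μ x) with hb
  have hmem : b ∈ LinearMap.range (auxT st M h) := by
    rw [aux_range]
    intro y hy
    rw [LinearMap.mem_ker] at hy
    have hharm : ∀ x ∈ X0, y (st x) = ∑ s, (M.p x {s}).toReal * y s := by
      intro x hx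
      have h0 : auxT' st M h y x = 0 := by rw [hy]; rfl
      simp only [auxT', LinearMap.coe_mk, AddHom.coe_mk, PiLp.toLp_apply, ← hX0, if_pos hx] at h0
      linarith
    have hpair : ⟪y, b⟫_ℝ = ∑ x ∈ Fc, μ x * ((∑ s, (M.p x {s}).toReal * y s) - y (st x)) := by
      simp only [PiLp.inner_apply, RCLike.inner_apply', conj_trivial, hb, PiLp.toLp_apply]
      exact aux_pairing st M μ y Fc
    have hzero : ∑ x ∈ Finset.univ.filter (fun x => x ∈ X0),
        μ x * ((∑ s, (M.p x {s}).toReal * y s) - y (st x)) = 0 :=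
      Finset.sum_eq_zero fun x hx => by
        rw [Finset.mem_filter] at hx
        rw [← hharm x hx.2, sub_self, mul_zero]
    have hsplit : ∑ x ∈ Fc, μ x * ((∑ s, (M.p x {s}).toReal * y s) - y (st x))
        = ∑ x : X, μ x * ((∑ s, (M.p x {s}).toReal * y s) - y (st x)) := by
      rw [← Finset.sum_filter_add_sum_filter_not Finset.univ (fun x => x ∈ X0)
        (fun x => μ x * ((∑ s, (M.p x {s}).toReal * y s) - y (st x))), hzero, zero_add]
    have hfull : ∑ x : X, μ x * ((∑ s, (M.p x {s}).toReal * y s) - y (st x))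
        = ∑ s, y s * ((∑ x, μ x * (M.p x {s}).toReal)
          - ∑ x ∈ Finset.univ.filter (fun x => st x = s), μ x) := by
      exact (aux_pairing st M μ y Finset.univ).symm
    rw [hpair, hsplit, hfull]
    exact aux_harmonic_orth st M h hbias μ hμ y hharm
  obtain ⟨ν, hν⟩ := hmem
  exact ⟨ν, hν⟩


/-- number of optimal pairs at a state -/
def auxN (s : S) : ℕ :=
  ((Finset.univ.filter (fun x => x ∈ optPairs st M h)).filter (fun x => st x = s)).card

/-- transition matrix of the uniform chain on the optimal pairs -/
def auxP (s s' : S) : ℝ :=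
  if 0 < auxN st M h s then
    (∑ x ∈ (Finset.univ.filter (fun x => x ∈ optPairs st M h)).filter (fun x => st x = s),
      (M.p x {s'}).toReal) / auxN st M h s
  else (if s = s' then 1 else 0)

lemma auxN_pos_iff (s : S) : 0 < auxN st M h s ↔ ∃ x ∈ optPairs st M h, st x = s := by
  rw [auxN, Finset.card_pos]
  constructor
  · rintro ⟨x, hx⟩
    simp only [Finset.mem_filter, Finset.mem_univ, true_and] at hx
    exact ⟨x, hx.1, hx.2⟩
  · rintro ⟨x, hx1, hx2⟩
    exact ⟨x, by simp [hx1, hx2]⟩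

lemma auxP_nonneg (s s' : S) : 0 ≤ auxP st M h s s' := by
  rw [auxP]
  split_ifs with h1 h2
  · exact div_nonneg (Finset.sum_nonneg fun x _ => ENNReal.toReal_nonneg) (by positivity)
  · exact zero_le_one
  · exact le_refl 0

lemma auxP_row (s : S) : ∑ s', auxP st M h s s' = 1 := by
  by_cases hn : 0 < auxN st M h s
  · have : ∑ s', auxP st M h s s'
        = (∑ s', ∑ x ∈ (Finset.univ.filter (fun x => x ∈ optPairs st M h)).filter
            (fun x => st x = s), (M.p x {s'}).toReal) / auxN st M h s := by
      rw [Finset.sum_div]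
      exact Finset.sum_congr rfl fun s' _ => by rw [auxP, if_pos hn]
    rw [this, Finset.sum_comm]
    have hsum : ∑ x ∈ (Finset.univ.filter (fun x => x ∈ optPairs st M h)).filter
        (fun x => st x = s), ∑ s', (M.p x {s'}).toReal
        = (auxN st M h s : ℝ) := by
      rw [Finset.sum_congr rfl fun x _ => aux_qsum M x]
      simp [auxN]
    rw [hsum, div_self (by positivity)]
  · have : ∀ s', auxP st M h s s' = if s = s' then 1 else 0 := fun s' => by
      rw [auxP, if_neg hn]
    simp only [this]
    rw [Finset.sum_ite_eq]
    simp

lemma auxP_class (hbias : IsOptBias st M h) {s s' : S} (hP : auxP st M h s s' ≠ 0) :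
    minorEq st M (optPairs st M h) s s' := by
  rw [auxP] at hP
  by_cases hn : 0 < auxN st M h s
  · rw [if_pos hn] at hP
    have hnum : ∑ x ∈ (Finset.univ.filter (fun x => x ∈ optPairs st M h)).filter
        (fun x => st x = s), (M.p x {s'}).toReal ≠ 0 := by
      intro hz
      exact hP (by rw [hz, zero_div])
    obtain ⟨x, hxmem, hxne⟩ := Finset.exists_ne_zero_of_sum_ne_zero hnum
    simp only [Finset.mem_filter, Finset.mem_univ, true_and] at hxmem
    have hp : M.p x {s'} ≠ 0 := fun hz => hxne (by simp [hz])
    have := aux_class_of_step st M h hbias hxmem.1 hp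
    rwa [hxmem.2] at this
  · rw [if_neg hn] at hP
    by_cases he : s = s'
    · exact he ▸ aux_minorEq_refl st M _ s
    · exact absurd (if_neg he) hP

lemma auxP_pos_edge (hbias : IsOptBias st M h) {x : X} {s s' : S}
    (hx : x ∈ optPairs st M h) (hxs : st x = s) (hp : M.p x {s'} ≠ 0) :
    0 < auxP st M h s s' := by
  have hn : 0 < auxN st M h s := (auxN_pos_iff st M h s).2 ⟨x, hx, hxs⟩
  rw [auxP, if_pos hn]
  refine div_pos ?_ (by positivity)
  refine Finset.sum_pos' (fun z _ => ENNReal.toReal_nonneg) ⟨x, ?_, ?_⟩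
  · simp [hx, hxs]
  · haveI := M.p_prob x
    exact ENNReal.toReal_pos hp (measure_ne_top _ _)

/-- existence of an invariant probability vector of the uniform optimal-pair chain,
positive on the minor class of `s0` -/
lemma aux_exists_rho (hbias : IsOptBias st M h) (s0 : S) :
    ∃ ρ : S → ℝ, (∀ s, 0 ≤ ρ s) ∧
      (∀ s, ¬ minorEq st M (optPairs st M h) s0 s → ρ s = 0) ∧
      (∀ s, minorEq st M (optPairs st M h) s0 s → 0 < ρ s) ∧
      (∀ s, ∑ s', ρ s' * auxP st M h s' s = ρ s) := by
  set X0 := optPairs st M h with hX0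
  set step : (S → ℝ) → (S → ℝ) := fun v s => ∑ s', v s' * auxP st M h s' s with hstep
  set a : ℕ → S → ℝ := fun k => step^[k] (fun s => if s0 = s then 1 else 0) with ha
  have ha0 : a 0 = fun s => if s0 = s then 1 else 0 := rfl
  have hasucc : ∀ k, a (k + 1) = step (a k) := by
    intro k
    rw [ha]
    exact Function.iterate_succ_apply' _ _ _
  have hann : ∀ k s, 0 ≤ a k s := by
    intro k
    induction k with
    | zero => intro s; rw [ha0]; positivity
    | succ k ih =>
        intro s
        rw [hasucc k]
        exact Finset.sum_nonneg fun s' _ => mul_nonneg (ih s') (auxP_nonneg st M h s' s)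
  have hasum : ∀ k, ∑ s, a k s = 1 := by
    intro k
    induction k with
    | zero => rw [ha0]; rw [Finset.sum_ite_eq]; simp
    | succ k ih =>
        rw [hasucc k]
        have : ∑ s, step (a k) s = ∑ s', a k s' * ∑ s, auxP st M h s' s := by
          simp only [hstep]
          rw [Finset.sum_comm]
          exact Finset.sum_congr rfl fun s' _ => (Finset.mul_sum _ _ _).symm
        rw [this]
        rw [Finset.sum_congr rfl fun s' _ => by rw [auxP_row st M h s']]
        simpa using ih
  have hasupp : ∀ k s, ¬ minorEq st M X0 s0 s → a k s = 0 := by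
    intro k
    induction k with
    | zero =>
        intro s hns
        rw [ha0]
        by_cases he : s0 = s
        · exact absurd (he ▸ aux_minorEq_refl st M X0 s0) hns
        · simp [he]
    | succ k ih =>
        intro s hns
        rw [hasucc k]
        refine Finset.sum_eq_zero fun s' _ => ?_
        by_cases hcl : minorEq st M X0 s0 s'
        · have hP0 : auxP st M h s' s = 0 := by
            by_contra hP
            exact hns (aux_minorEq_trans st M hcl (auxP_class st M h hbias hP))
          rw [hP0, mul_zero]
        · rw [ih s' hcl, zero_mul]
  have habd : ∀ k s, a k s ≤ 1 := by
    intro k s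
    calc a k s ≤ ∑ s', a k s' :=
          Finset.single_le_sum (fun s' _ => hann k s') (Finset.mem_univ s)
      _ = 1 := hasum k
  set c : ℕ → S → ℝ := fun n s => (∑ k ∈ Finset.range (n + 1), a k s) / (n + 1) with hc
  have hcmem : ∀ n, c n ∈ Set.pi Set.univ (fun _ : S => Set.Icc (0:ℝ) 1) := by
    intro n s _
    constructor
    · exact div_nonneg (Finset.sum_nonneg fun k _ => hann k s) (by positivity)
    · rw [div_le_one (by positivity)]
      calc ∑ k ∈ Finset.range (n + 1), a k s ≤ ∑ k ∈ Finset.range (n + 1), 1 :=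
            Finset.sum_le_sum fun k _ => habd k s
        _ = ((n : ℝ) + 1) := by simp
  obtain ⟨ρ, hρmem, φ, hφ, htend⟩ :=
    (isCompact_univ_pi fun _ : S => isCompact_Icc).tendsto_subseq hcmem
  have hcoord : ∀ s, Filter.Tendsto (fun n => c (φ n) s) Filter.atTop (nhds (ρ s)) :=
    fun s => tendsto_pi_nhds.1 htend s
  have hρnn : ∀ s, 0 ≤ ρ s := fun s =>
    ge_of_tendsto' (hcoord s) (fun n =>
      div_nonneg (Finset.sum_nonneg fun k _ => hann k s) (by positivity))
  have hρsupp : ∀ s, ¬ minorEq st M X0 s0 s → ρ s = 0 := by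
    intro s hns
    have hz : ∀ n, c (φ n) s = 0 := by
      intro n
      simp only [hc]
      rw [Finset.sum_eq_zero fun k _ => hasupp k s hns, zero_div]
    have : Filter.Tendsto (fun n => c (φ n) s) Filter.atTop (nhds 0) := by
      simpa [hz] using (tendsto_const_nhds :
        Filter.Tendsto (fun _ : ℕ => (0:ℝ)) Filter.atTop (nhds 0))
    exact tendsto_nhds_unique (hcoord s) this
  have hcsum : ∀ n, ∑ s, c n s = 1 := by
    intro n
    simp only [hc]
    calc ∑ s, (∑ k ∈ Finset.range (n + 1), a k s) / ((n : ℝ) + 1)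
        = ∑ s, ∑ k ∈ Finset.range (n + 1), a k s / ((n : ℝ) + 1) :=
          Finset.sum_congr rfl fun s _ => Finset.sum_div _ _ _
      _ = ∑ k ∈ Finset.range (n + 1), ∑ s, a k s / ((n : ℝ) + 1) := Finset.sum_comm
      _ = ∑ k ∈ Finset.range (n + 1), (∑ s, a k s) / ((n : ℝ) + 1) :=
          Finset.sum_congr rfl fun k _ => (Finset.sum_div _ _ _).symm
      _ = ∑ k ∈ Finset.range (n + 1), 1 / ((n : ℝ) + 1) :=
          Finset.sum_congr rfl fun k _ => by rw [hasum k]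
      _ = 1 := by
          rw [Finset.sum_const, Finset.card_range, nsmul_eq_mul]
          field_simp
          push_cast
          ring
  have hρsum : ∑ s, ρ s = 1 := by
    have h1 : Filter.Tendsto (fun n => ∑ s, c (φ n) s) Filter.atTop (nhds (∑ s, ρ s)) :=
      tendsto_finset_sum Finset.univ (fun s _ => hcoord s)
    have h2 : Filter.Tendsto (fun n => ∑ s, c (φ n) s) Filter.atTop (nhds 1) := by
      simpa [hcsum] using (tendsto_const_nhds :
        Filter.Tendsto (fun _ : ℕ => (1:ℝ)) Filter.atTop (nhds 1))
    exact tendsto_nhds_unique h1 h2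
  have hinv : ∀ s, ∑ s', ρ s' * auxP st M h s' s = ρ s := by
    intro s
    have hkey : ∀ n, ∑ s', c n s' * auxP st M h s' s
        = c n s + (a (n + 1) s - a 0 s) / ((n : ℝ) + 1) := by
      intro n
      have h1 : ∑ s', c n s' * auxP st M h s' s
          = (∑ k ∈ Finset.range (n + 1), step (a k) s) / ((n : ℝ) + 1) := by
        simp only [hc, hstep]
        calc ∑ s', (∑ k ∈ Finset.range (n + 1), a k s') / ((n : ℝ) + 1) * auxP st M h s' s
            = ∑ s', ∑ k ∈ Finset.range (n + 1),
                a k s' * auxP st M h s' s / ((n : ℝ) + 1) := by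
              refine Finset.sum_congr rfl fun s' _ => ?_
              rw [div_mul_eq_mul_div, Finset.sum_mul, Finset.sum_div]
          _ = ∑ k ∈ Finset.range (n + 1), ∑ s',
                a k s' * auxP st M h s' s / ((n : ℝ) + 1) := Finset.sum_comm
          _ = ∑ k ∈ Finset.range (n + 1),
                (∑ s', a k s' * auxP st M h s' s) / ((n : ℝ) + 1) :=
              Finset.sum_congr rfl fun k _ => (Finset.sum_div _ _ _).symm
          _ = (∑ k ∈ Finset.range (n + 1), ∑ s', a k s' * auxP st M h s' s)
                / ((n : ℝ) + 1) := (Finset.sum_div _ _ _).symm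
      have h2 : ∑ k ∈ Finset.range (n + 1), step (a k) s
          = ∑ k ∈ Finset.range (n + 1), a (k + 1) s := by
        exact Finset.sum_congr rfl fun k _ => by rw [← hasucc k]
      have h3 : ∑ k ∈ Finset.range (n + 1), a (k + 1) s
          = (∑ k ∈ Finset.range (n + 1), a k s) + a (n + 1) s - a 0 s := by
        have hs' := Finset.sum_range_succ' (fun k => a k s) (n + 1)
        have hs'' := Finset.sum_range_succ (fun k => a k s) (n + 1)
        linarith
      rw [h1, h2, h3]
      simp only [hc]
      ring
    have h1 : Filter.Tendsto (fun n => ∑ s', c (φ n) s' * auxP st M h s' s)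
        Filter.atTop (nhds (∑ s', ρ s' * auxP st M h s' s)) :=
      tendsto_finset_sum Finset.univ (fun s' _ => (hcoord s').mul_const _)
    have herr : Filter.Tendsto
        (fun n => (a (φ n + 1) s - a 0 s) / ((φ n : ℝ) + 1)) Filter.atTop (nhds 0) := by
      have habs : ∀ n, |(a (φ n + 1) s - a 0 s) / ((φ n : ℝ) + 1)| ≤ 1 / ((n : ℝ) + 1) := by
        intro n
        rw [abs_div]
        have hnum : |a (φ n + 1) s - a 0 s| ≤ 1 := by
          rw [abs_sub_le_iff]
          constructor
          · have := habd (φ n + 1) s; have := hann 0 s; linarith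
          · have := habd 0 s; have := hann (φ n + 1) s; linarith
        have hden : (n : ℝ) + 1 ≤ |(φ n : ℝ) + 1| := by
          rw [abs_of_pos (by positivity)]
          have hn : (n : ℝ) ≤ (φ n : ℝ) := by exact_mod_cast hφ.le_apply
          linarith
        exact div_le_div₀ zero_le_one hnum (by positivity) hden
      have hg : Filter.Tendsto (fun n : ℕ => 1 / ((n : ℝ) + 1)) Filter.atTop (nhds 0) :=
        tendsto_one_div_add_atTop_nhds_zero_nat
      have hgneg : Filter.Tendsto (fun n : ℕ => -(1 / ((n : ℝ) + 1))) Filter.atTop (nhds 0) := by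
        simpa using hg.neg
      refine tendsto_of_tendsto_of_tendsto_of_le_of_le hgneg hg ?_ ?_
      · exact fun n => (abs_le.1 (habs n)).1
      · exact fun n => (abs_le.1 (habs n)).2
    have h2 : Filter.Tendsto (fun n => ∑ s', c (φ n) s' * auxP st M h s' s)
        Filter.atTop (nhds (ρ s + 0)) := by
      have := (hcoord s).add herr
      simpa [hkey] using this
    have := tendsto_nhds_unique h1 h2
    simpa using this
  have hρpos : ∀ s, minorEq st M X0 s0 s → 0 < ρ s := by
    have hex : ∃ s1, 0 < ρ s1 := by
      by_contra hno
      push_neg at hno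
      have : ∀ s, ρ s = 0 := fun s => le_antisymm (hno s) (hρnn s)
      rw [Finset.sum_congr rfl fun s _ => this s] at hρsum
      simpa using hρsum
    obtain ⟨s1, hs1⟩ := hex
    have hs1cl : minorEq st M X0 s0 s1 := by
      by_contra hns
      rw [hρsupp s1 hns] at hs1
      exact lt_irrefl 0 hs1
    have hprop : ∀ u v, 0 < ρ u → 0 < auxP st M h u v → 0 < ρ v := by
      intro u v hu hP
      have hle : ρ u * auxP st M h u v ≤ ∑ s', ρ s' * auxP st M h s' v :=
        Finset.single_le_sum
          (f := fun s' => ρ s' * auxP st M h s' v)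
          (fun s' _ => mul_nonneg (hρnn s') (auxP_nonneg st M h s' v))
          (Finset.mem_univ u)
      rw [hinv v] at hle
      exact lt_of_lt_of_le (mul_pos hu hP) hle
    have hreach : ∀ v, reachIn st M X0 s1 v → 0 < ρ v := by
      intro v hv
      induction hv with
      | refl => exact hs1
      | @tail b c' hab hbc ih =>
          obtain ⟨x, hxX0, hxb, hpc⟩ := hbc
          exact hprop b c' ih (auxP_pos_edge st M h hbias hxX0 hxb hpc)
    intro s hs
    have hr1 : reachIn st M X0 s1 s0 := by
      rcases hs1cl with rfl | ⟨_, _, _, h4⟩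
      · exact Relation.ReflTransGen.refl
      · exact h4
    have hr2 : reachIn st M X0 s0 s := by
      rcases hs with rfl | ⟨_, _, h3, _⟩
      · exact Relation.ReflTransGen.refl
      · exact h3
    exact hreach s (hr1.trans hr2)
  exact ⟨ρ, hρnn, hρsupp, hρpos, hinv⟩


lemma aux_regroupF (F : Finset X) (f : X → ℝ) :
    ∑ s' : S, ∑ x ∈ F.filter (fun x => st x = s'), f x = ∑ x ∈ F, f x := by
  calc ∑ s' : S, ∑ x ∈ F.filter (fun x => st x = s'), f x
      = ∑ s' : S, ∑ x ∈ F, if st x = s' then f x else 0 :=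
        Finset.sum_congr rfl fun s' _ => Finset.sum_filter _ _
    _ = ∑ x ∈ F, ∑ s' : S, if st x = s' then f x else 0 := Finset.sum_comm
    _ = ∑ x ∈ F, f x := by
        refine Finset.sum_congr rfl fun x _ => ?_
        rw [Finset.sum_ite_eq]
        simp

lemma aux_exists_pi (hbias : IsOptBias st M h) :
    ∃ π : EuclideanSpace ℝ X, (∀ x, 0 ≤ π x) ∧ (∀ x ∈ optPairs st M h, 0 < π x) ∧
      auxT st M h π = 0 := by
  set X0 := optPairs st M h with hX0
  choose ρ hnn hsupp hpos hinv using aux_exists_rho st M h hbias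
  set S0f : Finset S := Finset.univ.filter (fun s0 => ∃ x ∈ X0, st x = s0) with hS0f
  set π : EuclideanSpace ℝ X := WithLp.toLp 2 (fun x => if x ∈ X0 then
      ∑ s0 ∈ S0f, ρ s0 (st x) / (auxN st M h (st x) : ℝ) else 0) with hπ
  have hzero : ∀ s0 ∈ S0f, ∀ s : S, ¬ 0 < auxN st M h s → ρ s0 s = 0 := by
    intro s0 hs0 s hn
    rw [hS0f, Finset.mem_filter] at hs0
    apply hsupp
    intro hcl
    rcases hcl with rfl | ⟨_, hs2, _, _⟩
    · exact hn ((auxN_pos_iff st M h s0).2 hs0.2)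
    · exact hn ((auxN_pos_iff st M h s).2 hs2)
  have hπnn : ∀ x, 0 ≤ π x := by
    intro x
    simp only [hπ, PiLp.toLp_apply]
    split_ifs
    · exact Finset.sum_nonneg fun s0 _ => div_nonneg (hnn s0 (st x)) (Nat.cast_nonneg _)
    · exact le_refl 0
  have hπpos : ∀ x ∈ X0, 0 < π x := by
    intro x hx
    simp only [hπ, PiLp.toLp_apply, if_pos hx]
    have hNpos : 0 < auxN st M h (st x) := (auxN_pos_iff st M h (st x)).2 ⟨x, hx, rfl⟩
    refine Finset.sum_pos' (fun s0 _ => div_nonneg (hnn s0 (st x)) (Nat.cast_nonneg _))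
      ⟨st x, ?_, ?_⟩
    · rw [hS0f]; simp only [Finset.mem_filter, Finset.mem_univ, true_and]
      exact ⟨x, hx, rfl⟩
    · exact div_pos (hpos (st x) (st x) (aux_minorEq_refl st M X0 (st x)))
        (by exact_mod_cast hNpos)
  refine ⟨π, hπnn, hπpos, ?_⟩
  ext s
  show (∑ x ∈ Finset.univ.filter (fun x => x ∈ optPairs st M h), (if st x = s then π x else 0))
    - ∑ x ∈ Finset.univ.filter (fun x => x ∈ optPairs st M h), π x * (M.p x {s}).toReal
    = (0 : EuclideanSpace ℝ S) s
  have hA : ∑ x ∈ Finset.univ.filter (fun x => x ∈ optPairs st M h),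
      (if st x = s then π x else 0) = ∑ s0 ∈ S0f, ρ s0 s := by
    have h1 : ∑ x ∈ Finset.univ.filter (fun x => x ∈ optPairs st M h),
        (if st x = s then π x else 0)
        = ∑ x ∈ (Finset.univ.filter (fun x => x ∈ optPairs st M h)).filter
            (fun x => st x = s), π x := (Finset.sum_filter _ _).symm
    have h2 : ∑ x ∈ (Finset.univ.filter (fun x => x ∈ optPairs st M h)).filter
        (fun x => st x = s), π x
        = ∑ x ∈ (Finset.univ.filter (fun x => x ∈ optPairs st M h)).filter
            (fun x => st x = s), ∑ s0 ∈ S0f, ρ s0 s / (auxN st M h s : ℝ) := by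
      refine Finset.sum_congr rfl fun x hx => ?_
      simp only [Finset.mem_filter, Finset.mem_univ, true_and] at hx
      simp only [hπ, PiLp.toLp_apply, ← hX0, if_pos (show x ∈ X0 from hx.1), hx.2]
    rw [h1, h2, Finset.sum_const]
    by_cases hn : 0 < auxN st M h s
    · have hcard : ((Finset.univ.filter (fun x => x ∈ optPairs st M h)).filter
          (fun x => st x = s)).card = auxN st M h s := rfl
      rw [hcard, nsmul_eq_mul, Finset.mul_sum]
      refine Finset.sum_congr rfl fun s0 _ => ?_
      rw [mul_div_cancel₀]
      exact_mod_cast hn.ne'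
    · have hcard : ((Finset.univ.filter (fun x => x ∈ optPairs st M h)).filter
          (fun x => st x = s)).card = 0 := by
        rw [show ((Finset.univ.filter (fun x => x ∈ optPairs st M h)).filter
          (fun x => st x = s)).card = auxN st M h s from rfl]
        omega
      rw [hcard, zero_smul]
      exact (Finset.sum_eq_zero fun s0 hs0 => hzero s0 hs0 s hn).symm
  have hB : ∑ x ∈ Finset.univ.filter (fun x => x ∈ optPairs st M h),
      π x * (M.p x {s}).toReal = ∑ s0 ∈ S0f, ρ s0 s := by
    have h1 : ∑ x ∈ Finset.univ.filter (fun x => x ∈ optPairs st M h),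
        π x * (M.p x {s}).toReal
        = ∑ x ∈ Finset.univ.filter (fun x => x ∈ optPairs st M h),
            ∑ s0 ∈ S0f, ρ s0 (st x) / (auxN st M h (st x) : ℝ) * (M.p x {s}).toReal := by
      refine Finset.sum_congr rfl fun x hx => ?_
      simp only [Finset.mem_filter, Finset.mem_univ, true_and] at hx
      simp only [hπ, PiLp.toLp_apply, ← hX0, if_pos (show x ∈ X0 from hx)]
      rw [Finset.sum_mul]
    rw [h1, Finset.sum_comm]
    refine Finset.sum_congr rfl fun s0 hs0 => ?_
    have h2 : ∑ x ∈ Finset.univ.filter (fun x => x ∈ optPairs st M h),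
        ρ s0 (st x) / (auxN st M h (st x) : ℝ) * (M.p x {s}).toReal
        = ∑ s' : S, ∑ x ∈ ((Finset.univ.filter (fun x => x ∈ optPairs st M h)).filter
            (fun x => st x = s')),
            ρ s0 (st x) / (auxN st M h (st x) : ℝ) * (M.p x {s}).toReal :=
      (aux_regroupF st _ _).symm
    rw [h2]
    have h3 : ∀ s' : S, ∑ x ∈ ((Finset.univ.filter (fun x => x ∈ optPairs st M h)).filter
        (fun x => st x = s')),
        ρ s0 (st x) / (auxN st M h (st x) : ℝ) * (M.p x {s}).toReal
        = ρ s0 s' * auxP st M h s' s := by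
      intro s'
      by_cases hn : 0 < auxN st M h s'
      · have hval : ∑ x ∈ ((Finset.univ.filter (fun x => x ∈ optPairs st M h)).filter
            (fun x => st x = s')),
            ρ s0 (st x) / (auxN st M h (st x) : ℝ) * (M.p x {s}).toReal
            = ρ s0 s' / (auxN st M h s' : ℝ)
              * ∑ x ∈ ((Finset.univ.filter (fun x => x ∈ optPairs st M h)).filter
                  (fun x => st x = s')), (M.p x {s}).toReal := by
          rw [Finset.mul_sum]
          refine Finset.sum_congr rfl fun x hx => ?_
          simp only [Finset.mem_filter, Finset.mem_univ, true_and] at hx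
          rw [hx.2]
        rw [hval, auxP, if_pos hn]
        rw [div_mul_eq_mul_div, mul_div_assoc]
      · have hempty : ((Finset.univ.filter (fun x => x ∈ optPairs st M h)).filter
            (fun x => st x = s')) = ∅ := by
          rw [← Finset.card_eq_zero]
          have : ((Finset.univ.filter (fun x => x ∈ optPairs st M h)).filter
            (fun x => st x = s')).card = auxN st M h s' := rfl
          omega
        rw [hempty, Finset.sum_empty, hzero s0 hs0 s' hn, zero_mul]
    rw [Finset.sum_congr rfl fun s' _ => h3 s']
    exact hinv s0 s
  rw [hA, hB, sub_self]
  rfl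


lemma aux_klDiv_self {α : Type} [MeasurableSpace α] (μ : Measure α)
    [IsProbabilityMeasure μ] : klDiv μ μ = 0 := by
  have h0 : llr μ μ =ᵐ[μ] 0 := by
    filter_upwards [μ.rnDeriv_self] with a ha
    simp [llr_def, ha]
  have hint : Integrable (llr μ μ) μ := (integrable_zero _ _ _).congr h0.symm
  rw [klDiv, if_pos ⟨Measure.AbsolutelyContinuous.rfl, hint⟩, integral_congr_ae h0]
  simp

/-- an invariant measure of `M` is an invariant measure of any minor of `M` -/
lemma aux_inv_to_minor (X0 : Set X) (μ : X → ℝ) (hμ : InvMeasure st M μ) :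
    MinorInvMeasure st M X0 μ := by
  refine ⟨hμ.1, fun s => ?_⟩
  have hR : ∑ x, μ x * ∑ s' ∈ Finset.univ.filter (fun s' => minorEq st M X0 s' s),
      (M.p x {s'}).toReal
      = ∑ s' ∈ Finset.univ.filter (fun s' => minorEq st M X0 s' s),
          ∑ x, μ x * (M.p x {s'}).toReal := by
    rw [Finset.sum_comm]
    exact Finset.sum_congr rfl fun x _ => Finset.mul_sum _ _ _
  rw [hR, Finset.sum_congr rfl fun s' _ => (hμ.2 s').symm,
    aux_regroup st (fun s' => minorEq st M X0 s' s) μ]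

/-- a minor-invariant measure can be corrected on the optimal pairs into a genuine
invariant measure -/
lemma aux_patch (hbias : IsOptBias st M h) (μ : X → ℝ)
    (hμ : MinorInvMeasure st M (optPairs st M h) μ) :
    ∃ μ' : X → ℝ, InvMeasure st M μ' ∧ ∀ x, ¬ x ∈ optPairs st M h → μ' x = μ x := by
  set X0 := optPairs st M h with hX0
  obtain ⟨ν₀, hν₀⟩ := aux_exists_nu st M h hbias μ hμ
  obtain ⟨π, hπnn, hπpos, hTπ⟩ := aux_exists_pi st M h hbias
  set cst : ℝ := ∑ x ∈ Finset.univ.filter (fun x => x ∈ X0), |ν₀ x| / π x with hcst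
  have hcge : ∀ x ∈ X0, |ν₀ x| / π x ≤ cst := by
    intro x hx
    refine Finset.single_le_sum (f := fun x => |ν₀ x| / π x) ?_ (by simp [hx])
    intro x' hx'
    simp only [Finset.mem_filter, Finset.mem_univ, true_and] at hx'
    exact div_nonneg (abs_nonneg _) (hπnn x')
  set ν : EuclideanSpace ℝ X := ν₀ + cst • π with hν
  have hTν : auxT st M h ν = auxT st M h ν₀ := by
    rw [hν, map_add, LinearMap.map_smul, hTπ, smul_zero, add_zero]
  have hνnn : ∀ x ∈ X0, 0 ≤ ν x := by
    intro x hx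
    have h1 : |ν₀ x| / π x ≤ cst := hcge x hx
    have h2 : 0 < π x := hπpos x hx
    have h3 : |ν₀ x| ≤ cst * π x := by
      rw [div_le_iff₀ h2] at h1
      exact h1
    have h4 := neg_abs_le (ν₀ x)
    have h5 : ν x = ν₀ x + cst * π x := by
      simp [hν, PiLp.add_apply, PiLp.smul_apply, smul_eq_mul]
    rw [h5]
    linarith
  set μ' : X → ℝ := fun x => if x ∈ X0 then ν x else μ x with hμ'
  refine ⟨μ', ⟨?_, ?_⟩, fun x hx => by simp [hμ', hx]⟩
  · intro x
    simp only [hμ']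
    split_ifs with hx
    · exact hνnn x hx
    · exact hμ.1 x
  · intro s
    have hE : (auxT st M h ν) s = (auxT st M h ν₀) s := by rw [hTν]
    have hEb : (auxT st M h ν₀) s
        = (∑ x ∈ Finset.univ.filter (fun x => ¬ x ∈ X0), μ x * (M.p x {s}).toReal)
          - ∑ x ∈ (Finset.univ.filter (fun x => ¬ x ∈ X0)).filter (fun x => st x = s),
              μ x := by rw [hν₀]
    have hEexpand : (auxT st M h ν) s
        = (∑ x ∈ Finset.univ.filter (fun x => x ∈ X0), (if st x = s then ν x else 0))
          - ∑ x ∈ Finset.univ.filter (fun x => x ∈ X0), ν x * (M.p x {s}).toReal := rfl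
    have hkey : (∑ x ∈ Finset.univ.filter (fun x => x ∈ X0), (if st x = s then ν x else 0))
        - ∑ x ∈ Finset.univ.filter (fun x => x ∈ X0), ν x * (M.p x {s}).toReal
        = (∑ x ∈ Finset.univ.filter (fun x => ¬ x ∈ X0), μ x * (M.p x {s}).toReal)
          - ∑ x ∈ (Finset.univ.filter (fun x => ¬ x ∈ X0)).filter (fun x => st x = s),
              μ x := by
      rw [← hEexpand]
      exact hE.trans hEb
    have h1 : ∑ x ∈ Finset.univ.filter (fun x => st x = s), μ' x
        = (∑ x ∈ Finset.univ.filter (fun x => x ∈ X0), (if st x = s then ν x else 0))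
          + ∑ x ∈ (Finset.univ.filter (fun x => ¬ x ∈ X0)).filter (fun x => st x = s),
              μ x := by
      rw [Finset.filter_filter]
      calc ∑ x ∈ Finset.univ.filter (fun x => st x = s), μ' x
          = ∑ x : X, if st x = s then μ' x else 0 := Finset.sum_filter _ _
        _ = ∑ x : X, ((if x ∈ X0 then (if st x = s then ν x else 0) else 0)
              + (if (¬ x ∈ X0) ∧ st x = s then μ x else 0)) := by
            refine Finset.sum_congr rfl fun x _ => ?_
            by_cases hx : x ∈ X0 <;> by_cases hs : st x = s <;> simp [hμ', hx, hs]
        _ = (∑ x : X, if x ∈ X0 then (if st x = s then ν x else 0) else 0)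
              + ∑ x : X, if (¬ x ∈ X0) ∧ st x = s then μ x else 0 :=
            Finset.sum_add_distrib
        _ = _ := by
            congr 1
            · exact (Finset.sum_filter _ _).symm
            · exact (Finset.sum_filter _ _).symm
    have h2 : ∑ x, μ' x * (M.p x {s}).toReal
        = (∑ x ∈ Finset.univ.filter (fun x => x ∈ X0), ν x * (M.p x {s}).toReal)
          + ∑ x ∈ Finset.univ.filter (fun x => ¬ x ∈ X0), μ x * (M.p x {s}).toReal := by
      calc ∑ x, μ' x * (M.p x {s}).toReal
          = ∑ x : X, ((if x ∈ X0 then ν x * (M.p x {s}).toReal else 0)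
              + (if ¬ x ∈ X0 then μ x * (M.p x {s}).toReal else 0)) := by
            refine Finset.sum_congr rfl fun x _ => ?_
            by_cases hx : x ∈ X0 <;> simp [hμ', hx]
        _ = (∑ x : X, if x ∈ X0 then ν x * (M.p x {s}).toReal else 0)
              + ∑ x : X, if ¬ x ∈ X0 then μ x * (M.p x {s}).toReal else 0 :=
            Finset.sum_add_distrib
        _ = _ := by
            congr 1
            · exact (Finset.sum_filter _ _).symm
            · exact (Finset.sum_filter _ _).symm
    rw [h1, h2]
    linarith [hkey]


end Aux

/-- **Removing the contraction.** The lower bound computed over invariant measures of the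
minor `M/X*(M)` coincides with the one computed over invariant measures of `M`. -/
theorem statement9
    (st : X → S) (hst : Function.Surjective st)
    (𝕄 : Set (MDP S X)) (h𝕄 : ∀ M' ∈ 𝕄, Communicating st M')
    (M : MDP S X) (hM : M ∈ 𝕄)
    (h : S → ℝ) (hbias : IsOptBias st M h) :
    sInf {c : EReal | ∃ μ : X → ℝ, MinorInvMeasure st M (optPairs st M h) μ ∧
        (∀ M' ∈ CnfSet st 𝕄 M h, 1 ≤ ∑ x, ENNReal.ofReal (μ x) * KLx M M' x) ∧
        c = ((∑ x, μ x * gap st M h x : ℝ) : EReal)}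
      = sInf {c : EReal | ∃ μ : X → ℝ, InvMeasure st M μ ∧
        (∀ M' ∈ CnfSet st 𝕄 M h, 1 ≤ ∑ x, ENNReal.ofReal (μ x) * KLx M M' x) ∧
        c = ((∑ x, μ x * gap st M h x : ℝ) : EReal)} := by
  have hsets : {c : EReal | ∃ μ : X → ℝ, MinorInvMeasure st M (optPairs st M h) μ ∧
        (∀ M' ∈ CnfSet st 𝕄 M h, 1 ≤ ∑ x, ENNReal.ofReal (μ x) * KLx M M' x) ∧
        c = ((∑ x, μ x * gap st M h x : ℝ) : EReal)}
      = {c : EReal | ∃ μ : X → ℝ, InvMeasure st M μ ∧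
        (∀ M' ∈ CnfSet st 𝕄 M h, 1 ≤ ∑ x, ENNReal.ofReal (μ x) * KLx M M' x) ∧
        c = ((∑ x, μ x * gap st M h x : ℝ) : EReal)} := by
    ext c
    simp only [Set.mem_setOf_eq]
    constructor
    · rintro ⟨μ, hμ, hKL, hc⟩
      obtain ⟨μ', hμ'inv, hμ'eq⟩ := aux_patch st M h hbias μ hμ
      have hgap : ∑ x, μ' x * gap st M h x = ∑ x, μ x * gap st M h x := by
        refine Finset.sum_congr rfl fun x _ => ?_
        by_cases hx : x ∈ optPairs st M h
        · rw [aux_gap_zero st M h hx, mul_zero, mul_zero]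
        · rw [hμ'eq x hx]
      refine ⟨μ', hμ'inv, ?_, ?_⟩
      · intro M' hM'
        have hsum : ∑ x, ENNReal.ofReal (μ' x) * KLx M M' x
            = ∑ x, ENNReal.ofReal (μ x) * KLx M M' x := by
          refine Finset.sum_congr rfl fun x _ => ?_
          by_cases hx : x ∈ optPairs st M h
          · have hKL0 : KLx M M' x = 0 := by
              obtain ⟨hp, hr⟩ := hM'.2 x hx
              haveI := M.p_prob x
              haveI := M.r_prob x
              simp only [KLx, hp, hr]
              rw [aux_klDiv_self, aux_klDiv_self, add_zero]
            rw [hKL0, mul_zero, mul_zero]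
          · rw [hμ'eq x hx]
        rw [hsum]
        exact hKL M' hM'
      · rw [hgap]
        exact hc
    · rintro ⟨μ, hμ, hKL, hc⟩
      exact ⟨μ, aux_inv_to_minor st M (optPairs st M h) μ hμ, hKL, hc⟩
  rw [hsets]

end MDPTheory
end
end
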